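/- arXiv:2605.30285 — 10 statements merged into one kernel-verified Lean document; each statement's English description precedes it below -/
import Mathlib

section
/- Let K and H be finite groups whose orders are coprime, and let S be a subgroup of K × H. Then there exists a bijection e : (K × H) ⧸ S ≃ (K ⧸ S₁) × (H ⧸ S₂) which is equivariant: for all (k,h) ∈ K × H and every coset x, the first component of e((k,h) • x) equals k • (first component of e x) and the second component equals h • (second component of e x). -/
lemma subgroup_eq_prod_of_coprime
    (K H : Type*) [Group K] [Group H] [Finite K] [Finite H]
    (hcop : Nat.Coprime (Nat.card K) (Nat.card H))
    (S : Subgroup (K × H)) :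
    S = (S.map (MonoidHom.fst K H)).prod (S.map (MonoidHom.snd K H)) := by
  apply le_antisymm
  · intro x hx
    exact ⟨⟨x, hx, rfl⟩, ⟨x, hx, rfl⟩⟩
  · have key1 : ∀ x : K × H, x ∈ S → (x.1, (1 : H)) ∈ S := by
      intro x hx
      have h1 : x ^ (Nat.card H) ∈ S := pow_mem hx _
      have h2 : (x ^ (Nat.card H)) = (x.1 ^ (Nat.card H), (1 : H)) :=
        Prod.ext (by simp) (by simp [pow_card_eq_one'])
      rw [h2] at h1
      have hco : (Nat.card H).Coprime (orderOf x.1) :=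
        Nat.Coprime.coprime_dvd_right (orderOf_dvd_natCard x.1) hcop.symm
      obtain ⟨m, hm⟩ := exists_pow_eq_self_of_coprime hco
      have := pow_mem h1 m
      rwa [Prod.pow_mk, hm, one_pow] at this
    have key2 : ∀ x : K × H, x ∈ S → ((1 : K), x.2) ∈ S := by
      intro x hx
      have h1 : x ^ (Nat.card K) ∈ S := pow_mem hx _
      have h2 : (x ^ (Nat.card K)) = ((1 : K), x.2 ^ (Nat.card K)) :=
        Prod.ext (by simp [pow_card_eq_one']) (by simp)
      rw [h2] at h1
      have hco : (Nat.card K).Coprime (orderOf x.2) :=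
        Nat.Coprime.coprime_dvd_right (orderOf_dvd_natCard x.2) hcop
      obtain ⟨m, hm⟩ := exists_pow_eq_self_of_coprime hco
      have := pow_mem h1 m
      rwa [Prod.pow_mk, hm, one_pow] at this
    rintro ⟨a, b⟩ ⟨⟨x, hx, hx1⟩, ⟨y, hy, hy1⟩⟩
    have h1 : (a, (1 : H)) ∈ S := by have := key1 x hx; simp only [MonoidHom.coe_fst] at hx1; rwa [hx1] at this
    have h2 : ((1 : K), b) ∈ S := by have := key2 y hy; simp only [MonoidHom.coe_snd] at hy1; rwa [hy1] at this
    have := mul_mem h1 h2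
    simpa using this

/-- For finite groups `K`, `H` with coprime orders and a subgroup `S` of `K × H`,
the coset space `(K × H) ⧸ S` decomposes equivariantly as the product of the
coset spaces of the projections of `S`. -/
theorem quotient_of_coprime_prod_equiv_prod_of_quotients
    (K H : Type*) [Group K] [Group H] [Finite K] [Finite H]
    (hcop : Nat.Coprime (Nat.card K) (Nat.card H))
    (S : Subgroup (K × H)) :
    ∃ e : ((K × H) ⧸ S) ≃
        (K ⧸ S.map (MonoidHom.fst K H)) × (H ⧸ S.map (MonoidHom.snd K H)),
      ∀ (k : K) (h : H) (x : (K × H) ⧸ S),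
        (e ((k, h) • x)).1 = k • (e x).1 ∧ (e ((k, h) • x)).2 = h • (e x).2 := by
  set S₁ := S.map (MonoidHom.fst K H)
  set S₂ := S.map (MonoidHom.snd K H)
  have hS : S = S₁.prod S₂ := subgroup_eq_prod_of_coprime K H hcop S
  have hwd : ∀ a b : K × H, (QuotientGroup.leftRel S).r a b →
      (QuotientGroup.leftRel S₁).r a.1 b.1 ∧ (QuotientGroup.leftRel S₂).r a.2 b.2 := by
    intro a b hab
    rw [QuotientGroup.leftRel_apply] at hab
    constructor
    · rw [QuotientGroup.leftRel_apply]
      exact ⟨a⁻¹ * b, hab, rfl⟩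
    · rw [QuotientGroup.leftRel_apply]
      exact ⟨a⁻¹ * b, hab, rfl⟩
  let f : ((K × H) ⧸ S) → (K ⧸ S₁) × (H ⧸ S₂) :=
    fun x => (Quotient.map' Prod.fst (fun a b h => (hwd a b h).1) x,
              Quotient.map' Prod.snd (fun a b h => (hwd a b h).2) x)
  have hinj : Function.Injective f := by
    intro x y
    induction x using Quotient.inductionOn' with | h a =>
    induction y using Quotient.inductionOn' with | h b =>
    intro hfe
    have h1 : (QuotientGroup.leftRel S₁).r a.1 b.1 :=
      Quotient.exact' (congrArg Prod.fst hfe)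
    have h2 : (QuotientGroup.leftRel S₂).r a.2 b.2 :=
      Quotient.exact' (congrArg Prod.snd hfe)
    rw [QuotientGroup.leftRel_apply] at h1 h2
    apply Quotient.sound'
    rw [QuotientGroup.leftRel_apply, hS]
    exact ⟨h1, h2⟩
  have hsurj : Function.Surjective f := by
    rintro ⟨x, y⟩
    induction x using Quotient.inductionOn' with | h a =>
    induction y using Quotient.inductionOn' with | h b =>
    exact ⟨Quotient.mk'' (a, b), rfl⟩
  refine ⟨Equiv.ofBijective f ⟨hinj, hsurj⟩, ?_⟩
  intro k h x
  induction x using Quotient.inductionOn' with | h a =>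
  exact ⟨rfl, rfl⟩
end

section
/- Let K and H be finite groups whose orders are coprime. Then for every subgroup S of K × H, the normalizer of S in K × H equals the product of the normalizers of its projections: Subgroup.normalizer S = Subgroup.prod (Subgroup.normalizer S₁) (Subgroup.normalizer S₂). -/
/-
A subgroup `S` of `K × H` with `gcd(|K|, |H|) = 1` is the product of its projections: if
`(k, h) ∈ S`, then `(k, h) ^ |H| = (k ^ |H|, 1)`, and since `|H|` is prime to the order of
`k`, a power of `k ^ |H|` is `k` again, so `(k, 1) ∈ S`; symmetrically `(1, h) ∈ S`.
The normalizer of a product subgroup is the product of the normalizers.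
-/

namespace Subgroup

variable {K H : Type*} [Group K] [Group H]

theorem mk_one_mem_of_mk_mem [Finite H] {S : Subgroup (K × H)} {k : K} {h : H}
    (hk : (Nat.card H).Coprime (orderOf k)) (hS : (k, h) ∈ S) : (k, 1) ∈ S := by
  obtain ⟨m, hm⟩ := exists_pow_eq_self_of_coprime hk
  have : ((k, h) ^ Nat.card H) ^ m ∈ S := S.pow_mem (S.pow_mem hS _) m
  simpa [Prod.pow_mk, pow_card_eq_one', hm] using this

theorem one_mk_mem_of_mk_mem [Finite K] {S : Subgroup (K × H)} {k : K} {h : H}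
    (hh : (Nat.card K).Coprime (orderOf h)) (hS : (k, h) ∈ S) : (1, h) ∈ S := by
  obtain ⟨m, hm⟩ := exists_pow_eq_self_of_coprime hh
  have : ((k, h) ^ Nat.card K) ^ m ∈ S := S.pow_mem (S.pow_mem hS _) m
  simpa [Prod.pow_mk, pow_card_eq_one', hm] using this

theorem eq_prod_map_fst_snd_of_coprime [Finite K] [Finite H]
    (hcop : (Nat.card K).Coprime (Nat.card H)) (S : Subgroup (K × H)) :
    S = (S.map (MonoidHom.fst K H)).prod (S.map (MonoidHom.snd K H)) := by
  refine le_antisymm (le_prod_iff.2 ⟨le_rfl, le_rfl⟩) (prod_le_iff.2 ⟨?_, ?_⟩)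
  · rintro _ ⟨k, ⟨⟨k, h⟩, hS, rfl⟩, rfl⟩
    exact mk_one_mem_of_mk_mem (hcop.symm.coprime_dvd_right (_root_.orderOf_dvd_natCard k)) hS
  · rintro _ ⟨h, ⟨⟨k, h⟩, hS, rfl⟩, rfl⟩
    exact one_mk_mem_of_mk_mem (hcop.coprime_dvd_right (_root_.orderOf_dvd_natCard h)) hS

theorem normalizer_prod (A : Subgroup K) (B : Subgroup H) :
    normalizer ((A.prod B : Subgroup (K × H)) : Set (K × H)) =
      (normalizer (A : Set K)).prod (normalizer (B : Set H)) := by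
  ext ⟨a, b⟩
  simp only [mem_normalizer_iff, mem_prod]
  constructor
  · intro hab
    exact ⟨fun x => by simpa using hab (x, 1), fun y => by simpa using hab (1, y)⟩
  · rintro ⟨ha, hb⟩ ⟨x, y⟩
    simp [ha x, hb y]

end Subgroup

/-- For finite groups `K`, `H` with coprime orders, the normalizer of a subgroup of
`K × H` is the product of the normalizers of its two projections (splitting of
Weyl groups). -/
theorem normalizer_of_subgroup_of_coprime_prod
    (K H : Type*) [Group K] [Group H] [Finite K] [Finite H]
    (hcop : Nat.Coprime (Nat.card K) (Nat.card H))
    (S : Subgroup (K × H)) :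
    Subgroup.normalizer (S : Set (K × H)) =
      (Subgroup.normalizer ((S.map (MonoidHom.fst K H) : Subgroup K) : Set K)).prod
        (Subgroup.normalizer ((S.map (MonoidHom.snd K H) : Subgroup H) : Set H)) := by
  conv_lhs => rw [Subgroup.eq_prod_map_fst_snd_of_coprime hcop S]
  exact Subgroup.normalizer_prod _ _
end

section
/- Let p be a prime and v a natural number with 1 ≤ v, and with 2 ≤ v in case p = 2. Let g be a p-adic integer with ‖g − 1‖ = p^(−v). Then for every natural number n ≥ 1, the quotient ring ℤ_[p] ⧸ Ideal.span {g^n − 1} is isomorphic as a ring to ZMod (p^(v + padicValNat p n)). -/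
/-!
Write `g = 1 + x`. If `p ∤ m` then `g ^ m - 1 = (g - 1) · ∑ gⁱ` and the geometric sum is a unit,
while `g ^ p - 1 = p x + ∑_{2 ≤ k < p} C(p, k) xᵏ + xᵖ` is dominated by `p x` as soon as
`‖x‖ ^ (p - 1) < ‖p‖` (this is where `v ≥ 2` for `p = 2` enters), a condition that only improves
when `g` is replaced by `g ^ p`.
Together these give `‖g ^ n - 1‖ = ‖n‖ ‖g - 1‖ = p ^ (-(v + ν_p(n)))`, so `g ^ n - 1` generates the
ideal `(p ^ (v + ν_p(n)))`, which is the kernel of the surjection `ℤ_[p] → ZMod (p ^ (v + ν_p(n)))`.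
-/

theorem add_one_pow_sub_one_eq {R : Type*} [CommRing R] (x : R) {n : ℕ} (hn : 1 ≤ n) :
    (x + 1) ^ n - 1 = n * x + ∑ k ∈ Finset.Ico 2 (n + 1), x ^ k * (n.choose k : R) := by
  rw [add_pow, Finset.range_eq_Ico, Finset.sum_eq_sum_Ico_succ_bot (by omega),
    Finset.sum_eq_sum_Ico_succ_bot (by omega)]
  simp only [one_pow, mul_one, pow_zero, Nat.choose_zero_right, zero_add, pow_one,
    Nat.choose_one_right, Nat.cast_one, Nat.reduceAdd]
  ring

namespace PadicInt

variable {p : ℕ} [Fact p.Prime]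

theorem norm_p_pos : 0 < ‖(p : ℤ_[p])‖ := by
  simp [(Fact.out : p.Prime).pos]

theorem norm_p_lt_one : ‖(p : ℤ_[p])‖ < 1 :=
  norm_natCast_lt_one_iff.2 dvd_rfl

theorem norm_le_norm_of_dvd {a b : ℤ_[p]} (h : a ∣ b) : ‖b‖ ≤ ‖a‖ := by
  obtain ⟨c, rfl⟩ := h
  simpa [norm_mul] using mul_le_of_le_one_right (norm_nonneg a) (norm_le_one c)

theorem norm_eq_one_of_not_dvd {x : ℤ_[p]} (h : ¬(p : ℤ_[p]) ∣ x) : ‖x‖ = 1 :=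
  (norm_le_one x).antisymm (not_lt.1 (mt (norm_lt_one_iff_dvd x).1 h))

theorem norm_lt_one_of_pow_pred_lt_norm_p {x : ℤ_[p]} (h : ‖x‖ ^ (p - 1) < ‖(p : ℤ_[p])‖) :
    ‖x‖ < 1 :=
  (pow_lt_one_iff_of_nonneg (norm_nonneg x) (by have := (Fact.out : p.Prime).two_le; omega)).1
    (h.trans norm_p_lt_one)

theorem norm_pow_sub_one_of_not_dvd {g : ℤ_[p]} (hg : ‖g - 1‖ < 1) {m : ℕ} (hm : ¬p ∣ m) :
    ‖g ^ m - 1‖ = ‖g - 1‖ := by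
  have hpg : (p : ℤ_[p]) ∣ g - 1 := (norm_lt_one_iff_dvd _).1 hg
  have hpg' : ¬(p : ℤ_[p]) ∣ g := fun h ↦ prime_p.not_dvd_one (by simpa using dvd_sub h hpg)
  have hpm : ¬(p : ℤ_[p]) ∣ m := by rwa [← norm_lt_one_iff_dvd, norm_natCast_lt_one_iff]
  have hfactor := geom_sum₂_mul g 1 m
  rw [one_pow] at hfactor
  rw [← hfactor, norm_mul, norm_eq_one_of_not_dvd (not_dvd_geom_sum₂ prime_p hpg hpg' hpm),
    one_mul]

theorem norm_pow_p_sub_one {g : ℤ_[p]} (hg : ‖g - 1‖ ^ (p - 1) < ‖(p : ℤ_[p])‖) :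
    ‖g ^ p - 1‖ = ‖(p : ℤ_[p])‖ * ‖g - 1‖ := by
  have hp := (Fact.out : p.Prime)
  obtain ⟨x, rfl⟩ : ∃ x, g = x + 1 := ⟨g - 1, by ring⟩
  rw [add_sub_cancel_right] at hg ⊢
  rcases eq_or_ne x 0 with rfl | hx
  · simp
  have hx0 : 0 < ‖x‖ := norm_pos_iff.2 hx
  have hx1 : ‖x‖ < 1 := norm_lt_one_of_pow_pred_lt_norm_p hg
  have hterm : ∀ k ∈ Finset.Ico 2 (p + 1),
      ‖x ^ k * (p.choose k : ℤ_[p])‖ < ‖(p : ℤ_[p]) * x‖ := by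
    intro k hk
    rw [Finset.mem_Ico] at hk
    rw [norm_mul, norm_mul, norm_pow]
    rcases (Nat.lt_succ_iff.1 hk.2).eq_or_lt with hkp | hkp
    · rw [hkp, Nat.choose_self, Nat.cast_one, norm_one, mul_one]
      calc ‖x‖ ^ p = ‖x‖ ^ (p - 1) * ‖x‖ := by rw [← pow_succ, Nat.sub_add_cancel hp.one_le]
        _ < ‖(p : ℤ_[p])‖ * ‖x‖ := mul_lt_mul_of_pos_right hg hx0
    · calc ‖x‖ ^ k * ‖(p.choose k : ℤ_[p])‖ ≤ ‖x‖ ^ k * ‖(p : ℤ_[p])‖ := by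
            gcongr
            exact norm_le_norm_of_dvd (Nat.cast_dvd_cast (hp.dvd_choose_self (by omega) hkp))
        _ < ‖x‖ * ‖(p : ℤ_[p])‖ :=
            mul_lt_mul_of_pos_right (pow_lt_self_of_lt_one₀ hx0 hx1 hk.1) norm_p_pos
        _ = ‖(p : ℤ_[p])‖ * ‖x‖ := mul_comm _ _
  obtain ⟨k, hk, hsum⟩ := IsUltrametricDist.exists_norm_finsetSum_le_of_nonempty
    (t := Finset.Ico 2 (p + 1)) ⟨p, by simp [hp.two_le]⟩ (fun k ↦ x ^ k * (p.choose k : ℤ_[p]))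
  have hlt := hsum.trans_lt (hterm k hk)
  rw [add_one_pow_sub_one_eq x hp.one_le,
    IsUltrametricDist.norm_add_eq_max_of_norm_ne_norm hlt.ne', max_eq_left hlt.le, norm_mul]

theorem norm_pow_p_pow_sub_one {g : ℤ_[p]} (hg : ‖g - 1‖ ^ (p - 1) < ‖(p : ℤ_[p])‖) (e : ℕ) :
    ‖g ^ p ^ e - 1‖ = ‖(p : ℤ_[p])‖ ^ e * ‖g - 1‖ := by
  induction e with
  | zero => simp
  | succ e ih =>
    have hle : ‖g ^ p ^ e - 1‖ ≤ ‖g - 1‖ := by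
      rw [ih]
      exact mul_le_of_le_one_left (norm_nonneg _) (pow_le_one₀ (norm_nonneg _) norm_p_lt_one.le)
    have hsmall : ‖g ^ p ^ e - 1‖ ^ (p - 1) < ‖(p : ℤ_[p])‖ :=
      (pow_le_pow_left₀ (norm_nonneg _) hle _).trans_lt hg
    rw [pow_succ, pow_mul, norm_pow_p_sub_one hsmall, ih, pow_succ, mul_comm _ ‖(p : ℤ_[p])‖,
      mul_assoc]

theorem norm_pow_sub_one {g : ℤ_[p]} (hg : ‖g - 1‖ ^ (p - 1) < ‖(p : ℤ_[p])‖) (n : ℕ) :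
    ‖g ^ n - 1‖ = ‖(n : ℤ_[p])‖ * ‖g - 1‖ := by
  have hp := (Fact.out : p.Prime)
  rcases eq_or_ne n 0 with rfl | hn
  · simp
  obtain ⟨e, m, hm, rfl⟩ := Nat.exists_eq_pow_mul_and_not_dvd hn p hp.ne_one
  have hpe : ‖g ^ p ^ e - 1‖ < 1 := by
    rw [norm_pow_p_pow_sub_one hg]
    exact mul_lt_one_of_nonneg_of_lt_one_right (pow_le_one₀ (norm_nonneg _) norm_p_lt_one.le)
      (norm_nonneg _) (norm_lt_one_of_pow_pred_lt_norm_p hg)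
  rw [pow_mul, norm_pow_sub_one_of_not_dvd hpe hm, norm_pow_p_pow_sub_one hg, Nat.cast_mul,
    Nat.cast_pow, norm_mul, norm_pow,
    norm_natCast_eq_one_iff.2 ((Nat.Prime.coprime_iff_not_dvd hp).2 hm), mul_one]

theorem norm_natCast_eq_norm_p_pow_padicValNat {n : ℕ} (hn : n ≠ 0) :
    ‖(n : ℤ_[p])‖ = ‖(p : ℤ_[p])‖ ^ padicValNat p n := by
  have hp := (Fact.out : p.Prime)
  obtain ⟨e, m, hm, rfl⟩ := Nat.exists_eq_pow_mul_and_not_dvd hn p hp.ne_one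
  rw [padicValNat.mul (pow_ne_zero _ hp.ne_zero) (by rintro rfl; simp at hm),
    padicValNat.prime_pow, padicValNat.eq_zero_of_not_dvd hm, add_zero, Nat.cast_mul,
    Nat.cast_pow, norm_mul, norm_pow,
    norm_natCast_eq_one_iff.2 ((Nat.Prime.coprime_iff_not_dvd hp).2 hm), mul_one]

theorem span_singleton_eq_span_p_pow_of_norm_eq {x : ℤ_[p]} {k : ℕ}
    (hx : ‖x‖ = ‖(p : ℤ_[p])‖ ^ k) : Ideal.span {x} = Ideal.span {(p : ℤ_[p]) ^ k} := by
  have hmem : x ∈ Ideal.span {(p : ℤ_[p]) ^ k} := by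
    rw [← norm_le_pow_iff_mem_span_pow, hx, norm_p, zpow_neg, zpow_natCast, inv_pow]
  obtain ⟨c, rfl⟩ := Ideal.mem_span_singleton.1 hmem
  have hc : ‖c‖ = 1 := by
    rw [norm_mul, norm_pow] at hx
    exact (mul_eq_left₀ (pow_ne_zero _ norm_p_pos.ne')).1 hx
  exact Ideal.span_singleton_mul_right_unit (isUnit_iff.2 hc) _

noncomputable def quotientSpanEquivZModPow {x : ℤ_[p]} {k : ℕ}
    (hx : ‖x‖ = ‖(p : ℤ_[p])‖ ^ k) : (ℤ_[p] ⧸ Ideal.span {x}) ≃+* ZMod (p ^ k) :=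
  (Ideal.quotEquivOfEq ((span_singleton_eq_span_p_pow_of_norm_eq hx).trans
    (ker_toZModPow k).symm)).trans
    (RingHom.quotientKerEquivOfSurjective (ZMod.ringHom_surjective (toZModPow k)))

end PadicInt

/-- If `‖g − 1‖ = p ^ (−v)` with `v ≥ 1` (and `v ≥ 2` when `p = 2`), then for `n ≥ 1`
the quotient `ℤ_[p] ⧸ (g ^ n − 1)` is isomorphic to `ℤ/p^(v + ν_p(n))`. -/
theorem padic_quotient_span_pow_sub_one
    (p : ℕ) [Fact p.Prime] (v : ℕ) (hv : 1 ≤ v) (hv2 : p = 2 → 2 ≤ v)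
    (g : ℤ_[p]) (hg : ‖g - 1‖ = (p : ℝ) ^ (-(v : ℤ)))
    (n : ℕ) (hn : 1 ≤ n) :
    Nonempty ((ℤ_[p] ⧸ Ideal.span {g ^ n - 1}) ≃+*
      ZMod (p ^ (v + padicValNat p n))) := by
  have hp := (Fact.out : p.Prime)
  have hg' : ‖g - 1‖ = ‖(p : ℤ_[p])‖ ^ v := by
    rw [hg, PadicInt.norm_p, zpow_neg, zpow_natCast, inv_pow]
  have hexp : 1 < v * (p - 1) := by
    rcases hp.two_le.eq_or_lt with h2 | h3
    · have := hv2 h2.symm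
      subst h2
      omega
    · exact lt_of_lt_of_le (by omega) (Nat.le_mul_of_pos_left _ hv)
  have hsmall : ‖g - 1‖ ^ (p - 1) < ‖(p : ℤ_[p])‖ := by
    rw [hg', ← pow_mul]
    simpa only [pow_one] using
      pow_lt_pow_right_of_lt_one₀ (PadicInt.norm_p_pos (p := p)) PadicInt.norm_p_lt_one hexp
  have hnorm : ‖g ^ n - 1‖ = ‖(p : ℤ_[p])‖ ^ (v + padicValNat p n) := by
    rw [PadicInt.norm_pow_sub_one hsmall,
      PadicInt.norm_natCast_eq_norm_p_pow_padicValNat (by omega), hg', pow_add, mul_comm]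
  exact ⟨PadicInt.quotientSpanEquivZModPow hnorm⟩
end

section
/- Let R be a commutative ring, a ∈ R, and n ≥ 1. Let C_n be the n × n cyclic permutation matrix over R. Then there exist matrices P, Q ∈ Matrix (Fin n) (Fin n) R whose determinants are units, such that P * (a • C_n − 1) * Q equals the diagonal matrix whose i-th diagonal entry is 1 for i < n − 1 and whose last diagonal entry is a^n − 1. -/
/-!
Let `U` be the unipotent upper triangular matrix `(a ^ (j - i))_{i ≤ j}`, the inverse of
`1 - a • N` for the nilpotent part `N` of `C_n`. Then `(a • C_n - 1) * U` is `-1` with its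
last row replaced by `(a, a², …, a^(n-1), a^n - 1)`. Clearing that row against the rows above
is left multiplication by `-1` with last row `(a, a², …, a^(n-1), 1)`, an involution, so both
transformations are invertible.
-/

def cyclicPermMatrix (n : ℕ) (R : Type*) [CommRing R] : Matrix (Fin n) (Fin n) R :=
  Matrix.of fun i j => if (j : ℕ) = ((i : ℕ) + 1) % n then 1 else 0

open Matrix

section

variable {R : Type*} [CommRing R]

theorem cyclicPermMatrix_eq_permMatrix (m : ℕ) :
    cyclicPermMatrix (m + 1) R = (Equiv.addRight (1 : Fin (m + 1))).permMatrix R := by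
  ext i j
  simp only [cyclicPermMatrix, of_apply, Equiv.Perm.permMatrix, PEquiv.toMatrix_apply,
    Equiv.toPEquiv_apply, Equiv.coe_addRight, Option.mem_def, Option.some.injEq, eq_comm,
    Fin.ext_iff, Fin.val_add, Fin.coe_ofNat_eq_mod, Nat.add_mod_mod]

theorem cyclicPermMatrix_mul {m : ℕ} {α : Type*} (A : Matrix (Fin (m + 1)) α R) :
    cyclicPermMatrix (m + 1) R * A = A.submatrix (· + 1) id := by
  rw [cyclicPermMatrix_eq_permMatrix, Equiv.Perm.permMatrix, PEquiv.toMatrix_toPEquiv_mul]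
  rfl

def upperPowMatrix {n : ℕ} (a : R) : Matrix (Fin n) (Fin n) R :=
  of fun i j => if i ≤ j then a ^ (j - i : ℕ) else 0

theorem det_upperPowMatrix {n : ℕ} (a : R) :
    (upperPowMatrix a : Matrix (Fin n) (Fin n) R).det = 1 := by
  rw [det_of_isUpperTriangular]
  · simp [upperPowMatrix]
  · intro i j hij
    exact if_neg (not_le.mpr hij)

theorem smul_cyclicPermMatrix_sub_one_mul_upperPowMatrix {m : ℕ} (a : R) :
    (a • cyclicPermMatrix (m + 1) R - 1) * upperPowMatrix a =
      updateRow (-1) (Fin.last m)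
        ((fun k : Fin (m + 1) => a ^ ((k : ℕ) + 1)) - Pi.single (Fin.last m) 1) := by
  ext i k
  rw [sub_mul, smul_mul, one_mul, cyclicPermMatrix_mul, updateRow_apply]
  simp only [Matrix.sub_apply, Matrix.smul_apply, submatrix_apply, id, upperPowMatrix, of_apply,
    Fin.le_def, smul_eq_mul]
  by_cases hi : i = Fin.last m
  · subst hi
    simp [Pi.single_apply, Fin.le_def, le_antisymm_iff, k.is_le, pow_succ']
  · rw [Fin.val_add_one_of_lt (Fin.lt_last_iff_ne_last.mpr hi), if_neg hi, neg_apply, one_apply]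
    rcases lt_trichotomy (i : ℕ) k with h | h | h
    · rw [if_pos (show (i : ℕ) + 1 ≤ k from h), if_pos h.le, if_neg (Fin.ne_of_val_ne h.ne),
        ← pow_succ', Nat.sub_add_eq, Nat.sub_add_cancel (Nat.sub_pos_of_lt h), sub_self, neg_zero]
    · obtain rfl := Fin.ext h
      simp
    · rw [if_neg (by omega), if_neg h.not_ge, if_neg (Fin.ne_of_val_ne h.ne')]
      simp

section UpdateRow

variable {n : Type*} [DecidableEq n]

theorem updateRow_one_single (i : n) (c : R) :
    updateRow 1 i (Pi.single i c) = diagonal (Function.update 1 i c) := by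
  ext r s
  by_cases hr : r = i
  · subst hr
    simp [diagonal_apply, Pi.single_apply, eq_comm]
  · simp [updateRow_apply, hr, one_apply, diagonal_apply]

variable [Fintype n]

theorem vecMul_updateRow_neg_one (i : n) (v w : n → R) (hv : v i = 1) :
    v ᵥ* updateRow (-1) i w = w - v + Pi.single i 1 := by
  ext c
  calc (v ᵥ* updateRow (-1) i w) c
      = ∑ k, ((if k = i then v k * (w c + (1 : Matrix n n R) k c) else 0)
          - v k * (1 : Matrix n n R) k c) := by
        refine Finset.sum_congr rfl fun k _ => ?_
        by_cases hk : k = i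
        · simp only [hk, updateRow_self, if_true]
          ring
        · simp [updateRow_apply, hk]
    _ = (w - v + Pi.single i 1 : n → R) c := by
        simp [Finset.sum_sub_distrib, hv, one_apply, Pi.single_apply, eq_comm]
        ring

theorem updateRow_neg_one_mul_updateRow_neg_one (i : n) (v w : n → R) (hv : v i = 1) :
    updateRow (-1) i v * updateRow (-1) i w = updateRow 1 i (w - v + Pi.single i 1) := by
  rw [updateRow_mul, vecMul_updateRow_neg_one i v w hv, neg_one_mul]
  ext r c
  by_cases hr : r = i
  · simp [hr]
  · simp [updateRow_apply, hr]

theorem updateRow_neg_one_mul_self (i : n) (v : n → R) (hv : v i = 1) :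
    updateRow (-1) i v * updateRow (-1) i v = 1 := by
  rw [updateRow_neg_one_mul_updateRow_neg_one i v v hv, sub_self, zero_add,
    updateRow_one_single, Function.update_eq_self_iff.mpr (Pi.one_apply i).symm]
  exact diagonal_one

end UpdateRow

end

/-- Smith-normal-form style reduction: `a • C_n − 1` is equivalent, via matrices with
unit determinant, to the diagonal matrix `diag(1, …, 1, a ^ n − 1)`. -/
theorem smul_cyclicPermMatrix_sub_one_equiv_diagonal
    (R : Type*) [CommRing R] (a : R) (n : ℕ) (hn : 1 ≤ n) :
    ∃ P Q : Matrix (Fin n) (Fin n) R, IsUnit P.det ∧ IsUnit Q.det ∧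
      P * (a • cyclicPermMatrix n R - 1) * Q =
        Matrix.diagonal (fun i : Fin n =>
          if (i : ℕ) < n - 1 then (1 : R) else a ^ n - 1) := by
  obtain ⟨m, rfl⟩ : ∃ m, n = m + 1 := ⟨n - 1, by omega⟩
  set r : Fin (m + 1) → R := fun k => a ^ ((k : ℕ) + 1)
  have hv : Function.update r (Fin.last m) 1 (Fin.last m) = 1 := Function.update_self ..
  refine ⟨updateRow (-1) (Fin.last m) (Function.update r (Fin.last m) 1), upperPowMatrix a,
    isUnit_det_of_right_inverse (updateRow_neg_one_mul_self _ _ hv),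
    by rw [det_upperPowMatrix]; exact isUnit_one, ?_⟩
  have hrow : r - Pi.single (Fin.last m) 1 - Function.update r (Fin.last m) 1
      + Pi.single (Fin.last m) 1 = Pi.single (Fin.last m) (a ^ (m + 1) - 1) := by
    ext k
    by_cases hk : k = Fin.last m <;> simp [hk, r]
  rw [Matrix.mul_assoc, smul_cyclicPermMatrix_sub_one_mul_upperPowMatrix,
    updateRow_neg_one_mul_updateRow_neg_one _ _ _ hv, hrow, updateRow_one_single]
  congr 1
  ext i
  by_cases hi : i = Fin.last m
  · simp [hi]
  · simp [hi, Fin.val_lt_last hi]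
end

section
/- Let R be a commutative ring, a ∈ R, and n ≥ 1. Let f be the R-linear endomorphism of Fin n → R given by multiplication by the matrix a • C_n − 1, where C_n is the n × n cyclic permutation matrix. Then the cokernel (Fin n → R) ⧸ LinearMap.range f is isomorphic as an R-module to R ⧸ Ideal.span {a^n − 1}. -/
section

variable {R : Type*} [CommRing R] {n : ℕ}

lemma Fin.val_add_one_eq_mod [NeZero n] (i : Fin n) : ((i + 1 : Fin n) : ℕ) = ((i : ℕ) + 1) % n := by
  rw [Fin.val_add, Fin.val_one', Nat.add_mod_mod]

lemma pow_val_add_one_of_pow_eq_one [NeZero n] {M : Type*} [Monoid M] {x : M} (hx : x ^ n = 1)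
    (i : Fin n) : x ^ ((i + 1 : Fin n) : ℕ) = x ^ (i : ℕ) * x := by
  rw [Fin.val_add_one_eq_mod, ← pow_eq_pow_mod _ hx, pow_succ]

lemma sum_mul_add_one_sub_mul_pow_eq_zero [NeZero n] {S : Type*} [CommRing S] {x : S}
    (hx : x ^ n = 1) (u : Fin n → S) :
    ∑ i : Fin n, (x * u (i + 1) - u i) * x ^ (i : ℕ) = 0 := by
  calc ∑ i : Fin n, (x * u (i + 1) - u i) * x ^ (i : ℕ)
      = ∑ i, u (i + 1) * x ^ ((i + 1 : Fin n) : ℕ) - ∑ i, u i * x ^ (i : ℕ) := by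
        simp only [pow_val_add_one_of_pow_eq_one hx, ← Finset.sum_sub_distrib]
        exact Finset.sum_congr rfl fun i _ => by ring
    _ = 0 := sub_eq_zero.2 (Equiv.sum_comp (Equiv.addRight 1) fun i => u i * x ^ (i : ℕ))

lemma cyclicPermMatrix_mulVec [NeZero n] (v : Fin n → R) :
    (cyclicPermMatrix n R).mulVec v = fun i => v (i + 1) := by
  ext i
  have hj : ∀ j : Fin n, (j : ℕ) = ((i : ℕ) + 1) % n ↔ j = i + 1 := fun j => by
    rw [← Fin.val_add_one_eq_mod, Fin.val_inj]
  simp [Matrix.mulVec, dotProduct, cyclicPermMatrix, hj]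

lemma toLin'_smul_cyclicPermMatrix_sub_one_apply [NeZero n] (a : R) (v : Fin n → R) (i : Fin n) :
    Matrix.toLin' (a • cyclicPermMatrix n R - 1) v i = a * v (i + 1) - v i := by
  simp [cyclicPermMatrix_mulVec]

lemma toLin'_smul_cyclicPermMatrix_sub_one_single [NeZero n] (a : R) (j : Fin n) :
    Matrix.toLin' (a • cyclicPermMatrix n R - 1) (Pi.single (j + 1) 1)
      = a • Pi.single j 1 - Pi.single (j + 1) 1 := by
  ext i
  rw [toLin'_smul_cyclicPermMatrix_sub_one_apply]
  simp [Pi.single_apply]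

section Cokernel

open Fin.NatCast

variable (n) (a : R)

def powWeightedSum : (Fin n → R) →ₗ[R] R :=
  Fintype.linearCombination R fun i : Fin n => a ^ (i : ℕ)

variable {n}

lemma powWeightedSum_apply (v : Fin n → R) : powWeightedSum n a v = ∑ i, v i * a ^ (i : ℕ) :=
  Fintype.linearCombination_apply R _ v

lemma powWeightedSum_single_zero [NeZero n] (r : R) : powWeightedSum n a (Pi.single 0 r) = r := by
  simp [powWeightedSum_apply, Pi.single_apply]

lemma powWeightedSum_toLin'_mem_span [NeZero n] (u : Fin n → R) :
    powWeightedSum n a (Matrix.toLin' (a • cyclicPermMatrix n R - 1) u)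
      ∈ Ideal.span {a ^ n - 1} := by
  set π := Ideal.Quotient.mk (Ideal.span {a ^ n - 1})
  have hπa : π a ^ n = 1 := by
    rw [← map_pow, ← map_one π, Ideal.Quotient.mk_eq_mk_iff_sub_mem]
    exact Ideal.subset_span rfl
  rw [← Ideal.Quotient.eq_zero_iff_mem, powWeightedSum_apply]
  simp only [toLin'_smul_cyclicPermMatrix_sub_one_apply]
  simp only [map_sum, map_mul, map_sub, map_pow]
  exact sum_mul_add_one_sub_mul_pow_eq_zero hπa (π ∘ u)

lemma mkQ_single_natCast [NeZero n] (k : ℕ) :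
    (LinearMap.range (Matrix.toLin' (a • cyclicPermMatrix n R - 1))).mkQ (Pi.single (k : Fin n) 1)
      = a ^ k • (LinearMap.range (Matrix.toLin' (a • cyclicPermMatrix n R - 1))).mkQ
          (Pi.single 0 1) := by
  set N := LinearMap.range (Matrix.toLin' (a • cyclicPermMatrix n R - 1))
  induction k with
  | zero => simp
  | succ k ih =>
    have hrel : N.mkQ (a • Pi.single (k : Fin n) 1 - Pi.single ((k : Fin n) + 1) 1) = 0 := by
      rw [← toLin'_smul_cyclicPermMatrix_sub_one_single, Submodule.mkQ_apply,
        Submodule.Quotient.mk_eq_zero]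
      exact LinearMap.mem_range_self _ _
    rw [map_sub, map_smul, sub_eq_zero, ih, smul_smul, ← pow_succ'] at hrel
    rw [Nat.cast_succ, ← hrel]

lemma pow_sub_one_smul_mkQ_single_zero [NeZero n] :
    (a ^ n - 1) • (LinearMap.range (Matrix.toLin' (a • cyclicPermMatrix n R - 1))).mkQ
      (Pi.single 0 1) = 0 := by
  have h := mkQ_single_natCast (n := n) a n
  rw [Fin.natCast_self] at h
  rw [sub_smul, one_smul, ← h, sub_self]

lemma mkQ_eq_powWeightedSum_smul [NeZero n] (v : Fin n → R) :
    (LinearMap.range (Matrix.toLin' (a • cyclicPermMatrix n R - 1))).mkQ v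
      = powWeightedSum n a v • (LinearMap.range (Matrix.toLin' (a • cyclicPermMatrix n R - 1))).mkQ
          (Pi.single 0 1) := by
  conv_lhs => rw [← Finset.univ_sum_single v]
  rw [map_sum, powWeightedSum_apply, Finset.sum_smul]
  refine Finset.sum_congr rfl fun j _ => ?_
  have hj := mkQ_single_natCast (n := n) a j
  rw [Fin.cast_val_eq_self] at hj
  have hsingle : Pi.single j (v j) = v j • Pi.single j (1 : R) := by
    rw [← Pi.single_smul', smul_eq_mul, mul_one]
  rw [hsingle, map_smul, hj, smul_smul]

lemma ker_mkQ_comp_powWeightedSum [NeZero n] :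
    LinearMap.ker ((Ideal.span {a ^ n - 1}).mkQ ∘ₗ powWeightedSum n a)
      = LinearMap.range (Matrix.toLin' (a • cyclicPermMatrix n R - 1)) := by
  ext v
  rw [LinearMap.mem_ker, LinearMap.comp_apply, Submodule.mkQ_apply, Submodule.Quotient.mk_eq_zero]
  constructor
  · intro hv
    obtain ⟨c, hc⟩ := Ideal.mem_span_singleton'.1 hv
    rw [← Submodule.Quotient.mk_eq_zero, ← Submodule.mkQ_apply, mkQ_eq_powWeightedSum_smul, ← hc,
      mul_smul, pow_sub_one_smul_mkQ_single_zero (n := n), smul_zero]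
  · rintro ⟨u, rfl⟩
    exact powWeightedSum_toLin'_mem_span a u

lemma surjective_mkQ_comp_powWeightedSum [NeZero n] :
    Function.Surjective ((Ideal.span {a ^ n - 1}).mkQ ∘ₗ powWeightedSum n a) := by
  intro x
  obtain ⟨r, rfl⟩ := Submodule.mkQ_surjective _ x
  exact ⟨Pi.single 0 r, by rw [LinearMap.comp_apply, powWeightedSum_single_zero]⟩

end Cokernel

end

/-- The cokernel of the linear endomorphism of `Fin n → R` given by the matrix
`a • C_n − 1` is isomorphic to `R ⧸ (a ^ n − 1)`. -/
theorem cokernel_smul_cyclicPermMatrix_sub_one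
    (R : Type*) [CommRing R] (a : R) (n : ℕ) (hn : 1 ≤ n) :
    Nonempty (((Fin n → R) ⧸
        LinearMap.range (Matrix.toLin' (a • cyclicPermMatrix n R - 1)))
      ≃ₗ[R] (R ⧸ Ideal.span {a ^ n - 1})) := by
  have : NeZero n := ⟨by omega⟩
  exact ⟨(Submodule.quotEquivOfEq _ _ (ker_mkQ_comp_powWeightedSum a).symm).trans
    (LinearMap.quotKerEquivOfSurjective _ (surjective_mkQ_comp_powWeightedSum a))⟩
end

section
/- Let p be an odd prime and K a finite commutative group with Monoid.exponent K = p^e. Let g be a natural number whose residue class generates the unit group (ZMod (p^e))ˣ, i.e. every unit of ℤ/p^e is a power of the class of g. Then for all a, b ∈ K: there exists j : ℕ with b = a^(g^j) if and only if Subgroup.zpowers a = Subgroup.zpowers b. -/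
/-!
The powers `a ^ k` generating the same cyclic subgroup as `a` are those with `k` a unit modulo
`orderOf a`. Since `orderOf a ∣ p ^ e`, reduction `(ℤ/p^e)ˣ → (ℤ/orderOf a)ˣ` is surjective, so
these units are exactly the classes of the powers of `g`. Conversely each `g ^ j` is such a unit:
for `p ≠ 2` and `p ^ e > 1` the group `(ℤ/p^e)ˣ` contains `-1 ≠ 1`, so some `g ^ j` with `j ≠ 0`
is a unit, hence so is `g`.
-/

theorem Nat.pow_ne_two {p : ℕ} (hp : p ≠ 2) (e : ℕ) : p ^ e ≠ 2 := by
  intro h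
  cases e with
  | zero => simp at h
  | succ e =>
    have hp1 : p ≠ 1 := by rintro rfl; simp at h
    have : p ∣ 2 := h ▸ dvd_pow_self p e.succ_ne_zero
    rcases (Nat.dvd_prime Nat.prime_two).mp this with h1 | h2
    exacts [hp1 h1, hp h2]

namespace ZMod

theorem isUnit_of_forall_units_eq_pow {n : ℕ} (hn : 2 < n) {x : ZMod n}
    (hx : ∀ u : (ZMod n)ˣ, ∃ j : ℕ, (u : ZMod n) = x ^ j) : IsUnit x := by
  have : Fact (2 < n) := ⟨hn⟩
  obtain ⟨j, hj⟩ := hx (-1)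
  have hj0 : j ≠ 0 := by
    rintro rfl
    exact neg_one_ne_one (by simpa using hj)
  rw [← isUnit_pow_iff hj0, ← hj]
  exact Units.isUnit _

theorem forall_units_eq_pow_of_dvd {m n : ℕ} [NeZero m] (h : n ∣ m) {g : ℕ}
    (hg : ∀ u : (ZMod m)ˣ, ∃ j : ℕ, (u : ZMod m) = (g : ZMod m) ^ j) :
    ∀ u : (ZMod n)ˣ, ∃ j : ℕ, (u : ZMod n) = (g : ZMod n) ^ j := by
  intro u
  obtain ⟨v, rfl⟩ := unitsMap_surjective h u
  obtain ⟨j, hj⟩ := hg v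
  exact ⟨j, by rw [unitsMap_val, hj, cast_pow h, cast_natCast h]⟩

end ZMod

section Group

variable {G : Type*} [Group G]

theorem Subgroup.zpowers_pow_eq_of_coprime (a : G) {m : ℕ} (h : m.Coprime (orderOf a)) :
    Subgroup.zpowers (a ^ m) = Subgroup.zpowers a :=
  le_antisymm (Subgroup.zpowers_le.mpr (Subgroup.npow_mem_zpowers a m))
    (Subgroup.zpowers_le.mpr (mem_zpowers_pow_iff.mpr h))

theorem IsOfFinOrder.exists_coprime_pow_eq_of_zpowers_eq {a b : G} (ha : IsOfFinOrder a)
    (h : Subgroup.zpowers a = Subgroup.zpowers b) :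
    ∃ k : ℕ, k.Coprime (orderOf a) ∧ a ^ k = b := by
  obtain ⟨k, rfl⟩ : b ∈ Submonoid.powers a :=
    ha.mem_powers_iff_mem_zpowers.mpr (h ▸ Subgroup.mem_zpowers b)
  exact ⟨k, mem_zpowers_pow_iff.mp (h ▸ Subgroup.mem_zpowers a), rfl⟩

end Group

theorem orbit_pow_iff_zpowers_eq_of_odd_prime_general
    (p : ℕ) (hp2 : p ≠ 2)
    (K : Type*) [CommGroup K] [Finite K] (e : ℕ)
    (hexp : Monoid.exponent K = p ^ e)
    (g : ℕ)
    (hg : ∀ u : (ZMod (p ^ e))ˣ, ∃ j : ℕ, (u : ZMod (p ^ e)) = (g : ZMod (p ^ e)) ^ j)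
    (a b : K) :
    (∃ j : ℕ, b = a ^ g ^ j) ↔ Subgroup.zpowers a = Subgroup.zpowers b := by
  have hdvd (x : K) : orderOf x ∣ p ^ e := hexp ▸ Monoid.order_dvd_exponent x
  have hpe : p ^ e ≠ 0 := hexp ▸ Monoid.exponent_ne_zero_of_finite
  constructor
  · rintro ⟨j, rfl⟩
    have hga : g.Coprime (orderOf a) := by
      rcases lt_or_ge 2 (p ^ e) with h2 | h2
      · exact ((ZMod.isUnit_iff_coprime g _).mp
          (ZMod.isUnit_of_forall_units_eq_pow h2 hg)).coprime_dvd_right (hdvd a)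
      · have : orderOf a ≤ 1 := (Nat.le_of_dvd (by omega) (hdvd a)).trans
          (by have := Nat.pow_ne_two hp2 e; omega)
        rw [Nat.le_antisymm this (orderOf_pos a)]
        exact Nat.coprime_one_right g
    exact (Subgroup.zpowers_pow_eq_of_coprime a (hga.pow_left j)).symm
  · intro h
    obtain ⟨k, hk, rfl⟩ := (isOfFinOrder_of_finite a).exists_coprime_pow_eq_of_zpowers_eq h
    have : NeZero (p ^ e) := ⟨hpe⟩
    obtain ⟨j, hj⟩ := ZMod.forall_units_eq_pow_of_dvd (hdvd a) hg (ZMod.unitOfCoprime k hk)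
    rw [ZMod.coe_unitOfCoprime, ← Nat.cast_pow, ZMod.natCast_eq_natCast_iff] at hj
    exact ⟨j, pow_eq_pow_iff_modEq.mpr hj⟩

/-- Let `p` be an odd prime and `K` a finite commutative group of exponent `p^e`.
If the residue class of `g` generates `(ℤ/p^e)ˣ`, then `b` lies in the orbit of `a`
under iteration of `x ↦ x^g` if and only if `a` and `b` generate the same cyclic
subgroup. -/
theorem orbit_pow_iff_zpowers_eq_of_odd_prime
    (p : ℕ) (hp : p.Prime) (hp2 : p ≠ 2)
    (K : Type*) [CommGroup K] [Finite K] (e : ℕ)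
    (hexp : Monoid.exponent K = p ^ e)
    (g : ℕ)
    (hg : ∀ u : (ZMod (p ^ e))ˣ, ∃ j : ℕ, (u : ZMod (p ^ e)) = (g : ZMod (p ^ e)) ^ j)
    (a b : K) :
    (∃ j : ℕ, b = a ^ g ^ j) ↔ Subgroup.zpowers a = Subgroup.zpowers b :=
  orbit_pow_iff_zpowers_eq_of_odd_prime_general p hp2 K e hexp g hg a b
end

section
/- Let g be an integer with g ≡ 5 (mod 8), and let K be a finite commutative group whose exponent is a power of 2. Then for all a, b ∈ K: there exists j : ℕ with b = a^(g^j) or b = (a^(g^j))⁻¹, if and only if Subgroup.zpowers a = Subgroup.zpowers b. -/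
private lemma gpow_two_pow_aux (g : ℤ) (hg : g % 8 = 5) (t : ℕ) :
    ∃ u : ℤ, g ^ (2 ^ t) = 1 + 2 ^ (t + 2) * u ∧ u % 2 = 1 := by
  induction t with
  | zero =>
    refine ⟨2 * (g / 8) + 1, ?_, by omega⟩
    have := Int.mul_ediv_add_emod g 8
    simp only [pow_zero, pow_one]
    omega
  | succ t ih =>
    obtain ⟨u, h1, h2⟩ := ih
    refine ⟨u + 2 ^ (t + 1) * u ^ 2, ?_, ?_⟩
    · have h3 : g ^ 2 ^ (t + 1) = (g ^ 2 ^ t) ^ 2 := by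
        rw [pow_succ, pow_mul]
      rw [h3, h1]; ring
    · have h4 : u + 2 ^ (t + 1) * u ^ 2 = u + 2 * (2 ^ t * u ^ 2) := by ring
      rw [h4, Int.add_mul_emod_self_left, h2]

private lemma key_cover (g : ℤ) (hg : g % 8 = 5) :
    ∀ e : ℕ, ∀ k : ℤ, k % 2 = 1 →
    ∃ j : ℕ, (2 : ℤ) ^ e ∣ k - g ^ j ∨ (2 : ℤ) ^ e ∣ k + g ^ j := by
  intro e
  induction e with
  | zero => exact fun k _ => ⟨0, Or.inl (by simp)⟩
  | succ e ih =>
    intro k hk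
    rcases e with _ | _ | e'
    · exact ⟨0, Or.inl (by simp only [pow_zero, pow_one]; omega)⟩
    · refine ⟨0, ?_⟩
      have h4 : (2 : ℤ) ^ 2 = 4 := by norm_num
      rw [pow_zero, h4]
      omega
    · obtain ⟨j, hj⟩ := ih k hk
      obtain ⟨u, hA, hu⟩ := gpow_two_pow_aux g hg e'
      have hgodd : Odd g := Int.odd_iff.mpr (by omega)
      obtain ⟨w, hw⟩ : Odd (g ^ j) := hgodd.pow
      obtain ⟨d, hd⟩ : ∃ d, u = 2 * d + 1 := ⟨u / 2, by omega⟩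
      subst hd
      rcases hj with ⟨m, hm⟩ | ⟨m, hm⟩
      · rcases Int.even_or_odd m with ⟨c, hc⟩ | ⟨c, hc⟩ <;> subst hc
        · exact ⟨j, Or.inl ⟨c, by linear_combination hm⟩⟩
        · refine ⟨j + 2 ^ e', Or.inl ⟨c - 2 * d * w - d - w, ?_⟩⟩
          rw [pow_add, hA, hw] at *
          rw [hw] at hm
          linear_combination hm
      · rcases Int.even_or_odd m with ⟨c, hc⟩ | ⟨c, hc⟩ <;> subst hc
        · exact ⟨j, Or.inr ⟨c, by linear_combination hm⟩⟩
        · refine ⟨j + 2 ^ e', Or.inr ⟨c + 2 * d * w + d + w + 1, ?_⟩⟩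
          rw [pow_add, hA, hw] at *
          rw [hw] at hm
          linear_combination hm

/-- Let `g ≡ 5 (mod 8)` and let `K` be a finite commutative group whose exponent is a
power of `2`. Then `b` lies in the orbit of `a` under `x ↦ x^g` together with
inversion if and only if `a` and `b` generate the same cyclic subgroup. -/
theorem orbit_pow_or_inv_iff_zpowers_eq_of_two_group
    (g : ℤ) (hg : g % 8 = 5)
    (K : Type*) [CommGroup K] [Finite K]
    (hexp : ∃ e : ℕ, Monoid.exponent K = 2 ^ e)
    (a b : K) :
    (∃ j : ℕ, b = a ^ g ^ j ∨ b = (a ^ g ^ j)⁻¹) ↔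
      Subgroup.zpowers a = Subgroup.zpowers b := by
  obtain ⟨e, he⟩ := hexp
  obtain ⟨d, -, hn⟩ := (Nat.dvd_prime_pow Nat.prime_two).mp
    (he ▸ Monoid.order_dvd_exponent a)
  have hgodd : Odd g := Int.odd_iff.mpr (by omega)
  constructor
  · rintro ⟨j, hb⟩
    have hcop : IsCoprime ((g : ℤ) ^ j) ((orderOf a : ℤ)) := by
      have h2 : IsCoprime g (2 : ℤ) := ⟨1, (1 - g) / 2, by omega⟩
      rw [hn]; push_cast
      exact h2.pow_left.pow_right
    obtain ⟨m, v, hmv⟩ := hcop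
    have hpow1 : a ^ (orderOf a : ℤ) = 1 := by
      rw [zpow_natCast, pow_orderOf_eq_one]
    have ha_eq : a = (a ^ g ^ j) ^ m := by
      calc a = a ^ (g ^ j * m + (orderOf a : ℤ) * v) := by
            rw [show g ^ j * m + (orderOf a : ℤ) * v = 1 by linarith, zpow_one]
        _ = (a ^ g ^ j) ^ m * (a ^ (orderOf a : ℤ)) ^ v := by
            rw [zpow_add, zpow_mul, zpow_mul]
        _ = (a ^ g ^ j) ^ m := by rw [hpow1, one_zpow, mul_one]
    have key : Subgroup.zpowers a = Subgroup.zpowers (a ^ g ^ j) := by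
      refine le_antisymm (Subgroup.zpowers_le.mpr ?_) (Subgroup.zpowers_le.mpr ?_)
      · have := Subgroup.zpow_mem_zpowers (a ^ g ^ j) m
        rwa [← ha_eq] at this
      · exact Subgroup.zpow_mem_zpowers a _
    rcases hb with rfl | rfl
    · exact key
    · rw [key, Subgroup.zpowers_inv]
  · intro h
    obtain ⟨k, hk⟩ := h ▸ Subgroup.mem_zpowers b
    obtain ⟨l, hl⟩ := h.symm ▸ Subgroup.mem_zpowers a
    change a ^ k = b at hk
    change b ^ l = a at hl
    by_cases h1 : orderOf a = 1
    · have ha1 : a = 1 := orderOf_eq_one_iff.mp h1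
      refine ⟨0, Or.inl ?_⟩
      rw [ha1, one_zpow, ← hk, ha1, one_zpow]
    · have hd1 : 1 ≤ d := by
        rcases Nat.eq_zero_or_pos d with rfl | hpos
        · simp only [pow_zero] at hn; exact absurd hn h1
        · exact hpos
      have hkl : a ^ (k * l) = a := by
        rw [zpow_mul, hk, hl]
      have hdvd : (orderOf a : ℤ) ∣ k * l - 1 := by
        apply orderOf_dvd_iff_zpow_eq_one.mpr
        rw [zpow_sub, hkl, zpow_one, mul_inv_cancel]
      have h2dvd : (2 : ℤ) ∣ (orderOf a : ℤ) := by
        rw [hn]; push_cast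
        exact dvd_pow_self 2 (by omega)
      have hkodd : k % 2 = 1 := by
        have : Odd (k * l) := by
          rw [Int.odd_iff]
          obtain ⟨c, hc⟩ := h2dvd.trans hdvd
          omega
        exact Int.odd_iff.mp (Int.odd_mul.mp this).1
      obtain ⟨j, hj⟩ := key_cover g hg d k hkodd
      have hnz : ((orderOf a : ℤ)) = 2 ^ d := by rw [hn]; push_cast; ring
      refine ⟨j, ?_⟩
      rcases hj with hdj | hdj
      · left
        have hz : a ^ (k - g ^ j) = 1 :=
          orderOf_dvd_iff_zpow_eq_one.mp (hnz ▸ hdj)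
        rw [← hk, show k = g ^ j + (k - g ^ j) by ring, zpow_add, hz, mul_one]
      · right
        have hz : a ^ (k + g ^ j) = 1 :=
          orderOf_dvd_iff_zpow_eq_one.mp (hnz ▸ hdj)
        rw [← hk, show k = -g ^ j + (k + g ^ j) by ring, zpow_add, hz, mul_one,
          zpow_neg]
end

section
/- Let K be a finite commutative group whose order is a power of 2, and let sq denote the subgroup of squares of K (the range of the homomorphism x ↦ x^2). Let Φ : (Subgroup K →₀ ZMod 2) →ₗ[ZMod 2] ((K →* ℤˣ) → ZMod 2) be the ZMod 2-linear map determined on basis vectors by Φ(Finsupp.single U 1)(χ) = 1 if U ≤ ker χ, and 0 otherwise. Then the kernel of Φ equals the ZMod 2-span of the set consisting of: (i) the elements Finsupp.single H 1 + Finsupp.single H' 1 for all subgroups H, H' of K with H ⊔ sq = H' ⊔ sq; and (ii) the elements Finsupp.single L 1 + Σ_M Finsupp.single M 1, the sum taken over all subgroups M with L < M < T, for all pairs of subgroups L ≤ T of K with sq ≤ L and Subgroup.relindex L T = 4. -/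
/-!
Every character `χ : K →* ℤˣ` kills the squares `K²`, so `Φ [K/H]` only depends on `H ⊔ K²`,
which accounts for the relations `D`. If `K² ≤ L ≤ T` with `T/L` a Klein four-group generated by
the classes of `a` and `b`, the three intermediate subgroups are `L⟨a⟩`, `L⟨b⟩`, `L⟨ab⟩`; a
character trivial on `L` is trivial on exactly one of them or on all three, according to the
values `χ a, χ b ∈ {±1}`, so `B_{T,L}` evaluates to `2`, `4` or `0`.

Conversely, modulo the relations every basis vector `[K/H]` is congruent to a combination of
subgroups of index at most `2`: `D` replaces `H` by `H ⊔ K²`, and as long as `[K : L] > 2` the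
elementary abelian quotient `K/L` contains a Klein four-group `T/L`, so `B_{T,L}` rewrites `[K/L]`
in terms of strictly larger subgroups. On subgroups of index at most `2` the map is injective,
since these are the kernels of the characters: evaluating at the character with kernel `W`
recovers the coefficient of `W`, and then the trivial character recovers that of `K`. The modular
law turns these two facts into the equality of submodules.
-/

open scoped Classical in
/-- The mod-2 linearization map `A(K)/2 → RO(K;ℝ)/2` (on the free `ZMod 2`-module with
basis the subgroups of `K`): the basis vector at a subgroup `U` is sent to the function
on characters `χ : K →* ℤˣ` which is `1` exactly when `U ≤ ker χ`. -/
noncomputable def linearizationMap (K : Type*) [CommGroup K] :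
    (Subgroup K →₀ ZMod 2) →ₗ[ZMod 2] ((K →* ℤˣ) → ZMod 2) :=
  Finsupp.lsum (ZMod 2) fun U : Subgroup K =>
    LinearMap.toSpanSingleton (ZMod 2) ((K →* ℤˣ) → ZMod 2)
      (fun χ : K →* ℤˣ => if U ≤ χ.ker then (1 : ZMod 2) else 0)

namespace Subgroup

open scoped Classical in
noncomputable def indexTwoChar {G : Type*} [Group G] (W : Subgroup G) (hW : W.index = 2) :
    G →* ℤˣ where
  toFun x := if x ∈ W then 1 else -1
  map_one' := if_pos W.one_mem
  map_mul' x y := by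
    by_cases hx : x ∈ W <;> by_cases hy : y ∈ W <;> simp [hx, hy, mul_mem_iff_of_index_two hW]

theorem ker_indexTwoChar {G : Type*} [Group G] (W : Subgroup G) (hW : W.index = 2) :
    (W.indexTwoChar hW).ker = W := by
  ext x
  by_cases hx : x ∈ W <;> simp [indexTwoChar, hx]

variable {G : Type*} [CommGroup G] {L M T : Subgroup G} {a b x y : G}

theorem mem_sup_zpowers_iff_of_sq_mem (hx : x ^ 2 ∈ L) :
    y ∈ L ⊔ zpowers x ↔ y ∈ L ∨ x * y ∈ L := by
  constructor
  · intro hy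
    obtain ⟨l, hl, _, ⟨n, rfl⟩, rfl⟩ := mem_sup.mp hy
    rcases Int.even_or_odd n with ⟨k, rfl⟩ | ⟨k, rfl⟩
    · left
      have h : l * x ^ (k + k) = l * (x ^ 2) ^ k := by
        rw [← zpow_natCast, ← zpow_mul]; push_cast; ring_nf
      simp only [h]
      exact mul_mem hl (zpow_mem hx k)
    · right
      have h : x * (l * x ^ (2 * k + 1)) = l * (x ^ 2) ^ (k + 1) := by
        rw [mul_left_comm, ← zpow_one_add, ← zpow_natCast, ← zpow_mul]; push_cast; ring_nf
      simp only [h]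
      exact mul_mem hl (zpow_mem hx _)
  · rintro (h | h)
    · exact mem_sup_left h
    · rw [← inv_mul_cancel_left x y]
      exact mul_mem (mem_sup_right (inv_mem (mem_zpowers x))) (mem_sup_left h)

theorem relIndex_sup_zpowers_of_sq_mem (hx : x ^ 2 ∈ L) (hxL : x ∉ L) :
    L.relIndex (L ⊔ zpowers x) = 2 :=
  relIndex_eq_two_iff_exists_notMem_and'.mpr ⟨x, mem_sup_right (mem_zpowers x), hxL,
    fun _ hy => ((mem_sup_zpowers_iff_of_sq_mem hx).mp hy).symm⟩

theorem sup_zpowers_eq_of_mem_sup_zpowers (hx : x ^ 2 ∈ L) (hy : y ∈ L ⊔ zpowers x)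
    (hyL : y ∉ L) : L ⊔ zpowers y = L ⊔ zpowers x := by
  have hxy : x * y ∈ L := ((mem_sup_zpowers_iff_of_sq_mem hx).mp hy).resolve_left hyL
  refine le_antisymm (sup_le le_sup_left (zpowers_le.mpr hy))
    (sup_le le_sup_left (zpowers_le.mpr ?_))
  rw [← mul_inv_cancel_right x y]
  exact mul_mem (mem_sup_left hxy) (mem_sup_right (inv_mem (mem_zpowers y)))

theorem eq_sup_zpowers_of_relIndex_eq_two (hLM : L ≤ M) (hM : L.relIndex M = 2)
    (hx : x ^ 2 ∈ L) (hxM : x ∈ M) (hxL : x ∉ L) : M = L ⊔ zpowers x := by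
  have hle : L ⊔ zpowers x ≤ M := sup_le hLM (zpowers_le.mpr hxM)
  have hmul := relIndex_mul_relIndex _ _ _ le_sup_left hle
  rw [relIndex_sup_zpowers_of_sq_mem hx hxL, hM] at hmul
  exact le_antisymm (relIndex_eq_one.mp (by omega)) hle

theorem sq_mem_of_range_powMonoidHom_le (hsq : (powMonoidHom 2 : G →* G).range ≤ L) (g : G) :
    g ^ 2 ∈ L :=
  hsq ⟨g, rfl⟩

theorem relIndex_sup_zpowers_sup_zpowers (hsq : (powMonoidHom 2 : G →* G).range ≤ L)
    (ha : a ∉ L) (hb : b ∉ L ⊔ zpowers a) : L.relIndex (L ⊔ zpowers a ⊔ zpowers b) = 4 := by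
  rw [← relIndex_mul_relIndex _ _ _ le_sup_left le_sup_left,
    relIndex_sup_zpowers_of_sq_mem (sq_mem_of_range_powMonoidHom_le hsq a) ha,
    relIndex_sup_zpowers_of_sq_mem
      (sq_mem_of_range_powMonoidHom_le (hsq.trans le_sup_left) b) hb]

theorem exists_relIndex_eq_four (hsq : (powMonoidHom 2 : G →* G).range ≤ L)
    (hL : 2 < L.index) : ∃ T, L ≤ T ∧ L.relIndex T = 4 := by
  obtain ⟨a, ha⟩ : ∃ a, a ∉ L := by
    by_contra! h
    simp [(eq_top_iff' L).mpr h] at hL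
  have ha2 := relIndex_mul_index (le_sup_left : L ≤ L ⊔ zpowers a)
  rw [relIndex_sup_zpowers_of_sq_mem (sq_mem_of_range_powMonoidHom_le hsq a) ha] at ha2
  obtain ⟨b, hb⟩ : ∃ b, b ∉ L ⊔ zpowers a := by
    by_contra! h
    rw [(eq_top_iff' _).mpr h, index_top] at ha2
    omega
  exact ⟨_, le_sup_left.trans le_sup_left, relIndex_sup_zpowers_sup_zpowers hsq ha hb⟩

theorem exists_eq_sup_zpowers_sup_zpowers (hsq : (powMonoidHom 2 : G →* G).range ≤ L)
    (hLT : L ≤ T) (h4 : L.relIndex T = 4) :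
    ∃ a b, a ∉ L ∧ b ∉ L ⊔ zpowers a ∧ T = L ⊔ zpowers a ⊔ zpowers b := by
  obtain ⟨a, haT, ha⟩ := SetLike.not_le_iff_exists.mp fun h : T ≤ L => by
    simp [relIndex_eq_one.mpr h] at h4
  have hLa : L ⊔ zpowers a ≤ T := sup_le hLT (zpowers_le.mpr haT)
  have h2 := relIndex_mul_relIndex _ _ _ le_sup_left hLa
  rw [relIndex_sup_zpowers_of_sq_mem (sq_mem_of_range_powMonoidHom_le hsq a) ha, h4] at h2
  obtain ⟨b, hbT, hb⟩ := SetLike.not_le_iff_exists.mp fun h : T ≤ L ⊔ zpowers a => by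
    simp [relIndex_eq_one.mpr h] at h2
  exact ⟨a, b, ha, hb, eq_sup_zpowers_of_relIndex_eq_two hLa (by omega)
    (sq_mem_of_range_powMonoidHom_le (hsq.trans le_sup_left) b) hbT hb⟩

theorem setOf_lt_lt_sup_zpowers_sup_zpowers (hsq : (powMonoidHom 2 : G →* G).range ≤ L)
    (ha : a ∉ L) (hb : b ∉ L ⊔ zpowers a) :
    {M | L < M ∧ M < L ⊔ zpowers a ⊔ zpowers b} =
      {L ⊔ zpowers a, L ⊔ zpowers b, L ⊔ zpowers (a * b)} := by
  have sq := sq_mem_of_range_powMonoidHom_le hsq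
  have mem_iff := fun {x y : G} => mem_sup_zpowers_iff_of_sq_mem (L := L) (y := y) (sq x)
  set T := L ⊔ zpowers a ⊔ zpowers b
  have h4 : L.relIndex T = 4 := relIndex_sup_zpowers_sup_zpowers hsq ha hb
  have hLT : L ≤ T := le_sup_left.trans le_sup_left
  ext M
  simp only [Set.mem_ofPred_eq, Set.mem_insert_iff, Set.mem_singleton_iff]
  constructor
  · rintro ⟨hLM, hMT⟩
    have hmul := relIndex_mul_relIndex _ _ _ hLM.le hMT.le
    rw [h4] at hmul
    have h1 : L.relIndex M ≠ 1 := fun h => hLM.not_ge (relIndex_eq_one.mp h)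
    have h1' : M.relIndex T ≠ 1 := fun h => hMT.not_ge (relIndex_eq_one.mp h)
    have h2 : L.relIndex M = 2 := by
      have := Nat.le_of_dvd (by norm_num) (Dvd.intro _ hmul)
      interval_cases h : L.relIndex M <;> omega
    obtain ⟨m, hmM, hmL⟩ := SetLike.exists_of_lt hLM
    rw [eq_sup_zpowers_of_relIndex_eq_two hLM.le h2 (sq m) hmM hmL]
    rcases (mem_sup_zpowers_iff_of_sq_mem
      (sq_mem_of_range_powMonoidHom_le (hsq.trans le_sup_left) b)).mp (hMT.le hmM) with h | h
    · exact .inl (sup_zpowers_eq_of_mem_sup_zpowers (sq a) h hmL)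
    rcases mem_iff.mp h with h | h
    · exact .inr (.inl (sup_zpowers_eq_of_mem_sup_zpowers (sq b) (mem_iff.mpr (.inr h)) hmL))
    · rw [← mul_assoc] at h
      exact .inr (.inr (sup_zpowers_eq_of_mem_sup_zpowers (sq _) (mem_iff.mpr (.inr h)) hmL))
  · have hlt : ∀ x ∈ T, x ∉ L → L < L ⊔ zpowers x ∧ L ⊔ zpowers x < T := fun x hxT hxL =>
      ⟨lt_of_le_of_ne le_sup_left fun h => hxL (h ▸ mem_sup_right (mem_zpowers x)),
        lt_of_le_of_ne (sup_le hLT (zpowers_le.mpr hxT)) fun h => by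
          have := relIndex_sup_zpowers_of_sq_mem (sq x) hxL
          rw [h, h4] at this
          omega⟩
    have haT : a ∈ T := mem_sup_left (mem_sup_right (mem_zpowers a))
    have hbT : b ∈ T := mem_sup_right (mem_zpowers b)
    have hbL : b ∉ L := fun h => hb (mem_sup_left h)
    rintro (rfl | rfl | rfl)
    · exact hlt a haT ha
    · exact hlt b hbT hbL
    · exact hlt _ (mul_mem haT hbT) fun h => hb (mem_iff.mpr (.inr h))

theorem sup_zpowers_ne_sup_zpowers (hsq : (powMonoidHom 2 : G →* G).range ≤ L)
    (ha : a ∉ L) (hb : b ∉ L ⊔ zpowers a) :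
    L ⊔ zpowers a ≠ L ⊔ zpowers b ∧ L ⊔ zpowers a ≠ L ⊔ zpowers (a * b) ∧
      L ⊔ zpowers b ≠ L ⊔ zpowers (a * b) := by
  have hab : L ⊔ zpowers a ≠ L ⊔ zpowers b := fun h => hb (h ▸ mem_sup_right (mem_zpowers b))
  refine ⟨hab, fun h => hb ?_, fun h => hab ?_⟩
  · rw [← inv_mul_cancel_left a b]
    exact mul_mem (mem_sup_right (inv_mem (mem_zpowers a))) (h ▸ mem_sup_right (mem_zpowers _))
  · refine sup_zpowers_eq_of_mem_sup_zpowers (sq_mem_of_range_powMonoidHom_le hsq b) ?_ ha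
    rw [← mul_inv_cancel_right a b]
    exact mul_mem (h ▸ mem_sup_right (mem_zpowers _)) (mem_sup_right (inv_mem (mem_zpowers b)))

end Subgroup

open Finsupp Subgroup

section Linearization

variable {K : Type*} [CommGroup K]

open scoped Classical in
theorem linearizationMap_apply (f : Subgroup K →₀ ZMod 2) (χ : K →* ℤˣ) :
    linearizationMap K f χ = f.sum fun U c => if U ≤ χ.ker then c else 0 := by
  simp [linearizationMap, Finsupp.lsum_apply, Finsupp.sum, LinearMap.toSpanSingleton_apply]

open scoped Classical in
theorem linearizationMap_single (U : Subgroup K) (χ : K →* ℤˣ) :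
    linearizationMap K (single U 1) χ = if U ≤ χ.ker then 1 else 0 := by
  simp [linearizationMap]

theorem linearizationMap_apply_eq_of_support {f : Subgroup K →₀ ZMod 2} {χ : K →* ℤˣ}
    {W : Subgroup K} (hW : ∀ U ∈ f.support, U ≤ χ.ker ↔ U = W) :
    linearizationMap K f χ = f W := by
  classical
  rw [linearizationMap_apply, Finsupp.sum_eq_single W]
  · by_cases hWf : f W = 0
    · simp [hWf]
    · simp [(hW W (mem_support_iff.mpr hWf)).mpr rfl]
  · intro U hU hUW
    simp [(hW U (mem_support_iff.mpr hU)).not.mpr hUW]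
  · simp

theorem ker_linearizationMap_inf_supported_index_le_two [Finite K] :
    LinearMap.ker (linearizationMap K) ⊓
      supported (ZMod 2) (ZMod 2) {W : Subgroup K | W.index ≤ 2} = ⊥ := by
  refine (Submodule.eq_bot_iff _).mpr fun f ⟨hΦ, hf⟩ => ?_
  rw [SetLike.mem_coe, mem_supported] at hf
  rw [SetLike.mem_coe, LinearMap.mem_ker] at hΦ
  have top_or_two : ∀ U ∈ f.support, U = ⊤ ∨ U.index = 2 := fun U hU => by
    have h2 : U.index ≤ 2 := hf hU
    have h0 := U.index_ne_zero_of_finite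
    rw [← index_eq_one]
    omega
  have two : ∀ W : Subgroup K, W.index = 2 → f W = 0 := fun W hW2 => by
    rw [← linearizationMap_apply_eq_of_support (χ := W.indexTwoChar hW2), hΦ, Pi.zero_apply]
    intro U hU
    rw [ker_indexTwoChar]
    rcases top_or_two U hU with rfl | hU2
    · simp only [top_le_iff, eq_comm (a := ⊤)]
    · refine ⟨fun hUW => le_antisymm hUW (relIndex_eq_one.mp ?_), fun h => h.le⟩
      have := relIndex_mul_index hUW
      rw [hU2, hW2] at this
      omega
  have top : f ⊤ = 0 := by
    rw [← linearizationMap_apply_eq_of_support (χ := 1), hΦ, Pi.zero_apply]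
    intro U hU
    simp only [MonoidHom.ker_one, le_top, true_iff]
    exact (top_or_two U hU).resolve_right fun h => mem_support_iff.mp hU (two U h)
  ext W
  by_contra hW
  rcases top_or_two W (mem_support_iff.mpr hW) with rfl | h2
  · exact hW top
  · exact hW (two W h2)

variable (K) in
def linearizationRelations : Set (Subgroup K →₀ ZMod 2) :=
  {x | ∃ H H' : Subgroup K,
      H ⊔ (powMonoidHom 2 : K →* K).range = H' ⊔ (powMonoidHom 2 : K →* K).range ∧
      x = single H 1 + single H' 1} ∪
    {x | ∃ L T : Subgroup K, L ≤ T ∧ (powMonoidHom 2 : K →* K).range ≤ L ∧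
      L.relIndex T = 4 ∧ x = single L 1 + ∑ᶠ (M : Subgroup K) (_ : L < M ∧ M < T), single M 1}

theorem range_powMonoidHom_two_le_ker (χ : K →* ℤˣ) :
    (powMonoidHom 2 : K →* K).range ≤ χ.ker := by
  rintro _ ⟨x, rfl⟩
  simp [MonoidHom.mem_ker, Int.units_sq]

theorem linearizationMap_single_add_single {H H' : Subgroup K}
    (h : H ⊔ (powMonoidHom 2 : K →* K).range = H' ⊔ (powMonoidHom 2 : K →* K).range) :
    linearizationMap K (single H 1 + single H' 1) = 0 := by
  ext χ
  have hle : ∀ U : Subgroup K, U ≤ χ.ker ↔ U ⊔ (powMonoidHom 2 : K →* K).range ≤ χ.ker :=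
    fun U => by simp [range_powMonoidHom_two_le_ker χ]
  rw [map_add, Pi.add_apply, Pi.zero_apply, linearizationMap_single, linearizationMap_single,
    hle H, hle H', h]
  split_ifs <;> decide

theorem linearizationMap_single_add_finsum {L T : Subgroup K}
    (hsq : (powMonoidHom 2 : K →* K).range ≤ L) (hLT : L ≤ T) (h4 : L.relIndex T = 4) :
    linearizationMap K
      (single L 1 + ∑ᶠ (M : Subgroup K) (_ : L < M ∧ M < T), single M 1) = 0 := by
  obtain ⟨a, b, ha, hb, rfl⟩ := exists_eq_sup_zpowers_sup_zpowers hsq hLT h4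
  obtain ⟨hab, haab, hbab⟩ := sup_zpowers_ne_sup_zpowers hsq ha hb
  have hsum : ∑ᶠ (M : Subgroup K) (_ : L < M ∧ M < L ⊔ zpowers a ⊔ zpowers b),
      single M (1 : ZMod 2) = single (L ⊔ zpowers a) 1 +
        (single (L ⊔ zpowers b) 1 + single (L ⊔ zpowers (a * b)) 1) := by
    rw [← finsum_mem_pair (f := fun M => single M (1 : ZMod 2)) hbab,
      ← finsum_mem_insert (fun M => single M (1 : ZMod 2)) (by simp [hab, haab]) (Set.toFinite _),
      ← setOf_lt_lt_sup_zpowers_sup_zpowers hsq ha hb]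
    rfl
  rw [hsum]
  ext χ
  simp only [map_add, Pi.add_apply, linearizationMap_single, sup_le_iff, zpowers_le,
    MonoidHom.mem_ker, map_mul, Pi.zero_apply]
  rcases Int.units_eq_one_or (χ a) with ha1 | ha1 <;>
    rcases Int.units_eq_one_or (χ b) with hb1 | hb1 <;>
    by_cases hL : L ≤ χ.ker <;> simp [ha1, hb1, hL] <;> decide

theorem linearizationRelations_subset_ker :
    linearizationRelations K ⊆ LinearMap.ker (linearizationMap K) := by
  rintro _ (⟨H, H', h, rfl⟩ | ⟨L, T, hLT, hsq, h4, rfl⟩)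
  · exact linearizationMap_single_add_single h
  · exact linearizationMap_single_add_finsum hsq hLT h4

theorem span_linearizationRelations_sup_supported_index_le_two [Finite K] :
    Submodule.span (ZMod 2) (linearizationRelations K) ⊔
      supported (ZMod 2) (ZMod 2) {W : Subgroup K | W.index ≤ 2} = ⊤ := by
  set S := Submodule.span (ZMod 2) (linearizationRelations K) ⊔
    supported (ZMod 2) (ZMod 2) {W : Subgroup K | W.index ≤ 2}
  have of_range_le : ∀ W : Subgroup K, (powMonoidHom 2 : K →* K).range ≤ W →
      single W (1 : ZMod 2) ∈ S := by
    intro W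
    induction W using WellFoundedGT.induction with
    | _ W ih =>
    intro hsq
    by_cases hW : W.index ≤ 2
    · exact Submodule.mem_sup_right (single_mem_supported (ZMod 2) 1 hW)
    obtain ⟨T, hWT, h4⟩ := exists_relIndex_eq_four hsq (by omega)
    have hB : single W 1 + ∑ᶠ (M : Subgroup K) (_ : W < M ∧ M < T), single M 1 ∈ S :=
      Submodule.mem_sup_left (Submodule.subset_span (.inr ⟨W, T, hWT, hsq, h4, rfl⟩))
    have hsum : ∑ᶠ (M : Subgroup K) (_ : W < M ∧ M < T), single M (1 : ZMod 2) ∈ S :=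
      finsum_induction (· ∈ S) S.zero_mem (fun _ _ => S.add_mem) fun M =>
        finsum_induction (· ∈ S) S.zero_mem (fun _ _ => S.add_mem) fun hM =>
          ih M hM.1 (hsq.trans hM.1.le)
    simpa using S.sub_mem hB hsum
  rw [eq_top_iff, ← Finsupp.basisSingleOne.span_eq, Submodule.span_le]
  rintro _ ⟨H, rfl⟩
  have hD : single H 1 + single (H ⊔ (powMonoidHom 2 : K →* K).range) 1 ∈ S :=
    Submodule.mem_sup_left (Submodule.subset_span (.inl ⟨_, _, by rw [sup_assoc, sup_idem], rfl⟩))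
  simpa using S.sub_mem hD (of_range_le (H ⊔ _) le_sup_right)

end Linearization

theorem ker_linearizationMap_eq_span_relations_general
    (K : Type*) [CommGroup K] [Finite K] :
    LinearMap.ker (linearizationMap K) =
      Submodule.span (ZMod 2)
        ({x : Subgroup K →₀ ZMod 2 | ∃ H H' : Subgroup K,
            H ⊔ (powMonoidHom 2 : K →* K).range = H' ⊔ (powMonoidHom 2 : K →* K).range ∧
            x = Finsupp.single H 1 + Finsupp.single H' 1} ∪
         {x : Subgroup K →₀ ZMod 2 | ∃ L T : Subgroup K,
            L ≤ T ∧ (powMonoidHom 2 : K →* K).range ≤ L ∧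
            Subgroup.relIndex L T = 4 ∧
            x = Finsupp.single L 1 +
              ∑ᶠ (M : Subgroup K) (_ : L < M ∧ M < T), Finsupp.single M 1}) := by
  change _ = Submodule.span (ZMod 2) (linearizationRelations K)
  exact (eq_of_le_of_inf_le_of_sup_le (Submodule.span_le.mpr linearizationRelations_subset_ker)
    (ker_linearizationMap_inf_supported_index_le_two.trans_le bot_le)
    (le_top.trans span_linearizationRelations_sup_supported_index_le_two.ge)).symm

/-- For a finite abelian `2`-group `K`, the kernel of the mod-2 linearization map is
spanned by the relations `D_{H,H'} = [K/H] + [K/H']` for `H + 2K = H' + 2K`, and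
`B_{T,L} = [K/L] + Σ_{L < M < T} [K/M]` for `2K ≤ L ≤ T` with `[T : L] = 4`. -/
theorem ker_linearizationMap_eq_span_relations
    (K : Type*) [CommGroup K] [Finite K] (hK : ∃ m : ℕ, Nat.card K = 2 ^ m) :
    LinearMap.ker (linearizationMap K) =
      Submodule.span (ZMod 2)
        ({x : Subgroup K →₀ ZMod 2 | ∃ H H' : Subgroup K,
            H ⊔ (powMonoidHom 2 : K →* K).range = H' ⊔ (powMonoidHom 2 : K →* K).range ∧
            x = Finsupp.single H 1 + Finsupp.single H' 1} ∪
         {x : Subgroup K →₀ ZMod 2 | ∃ L T : Subgroup K,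
            L ≤ T ∧ (powMonoidHom 2 : K →* K).range ≤ L ∧
            Subgroup.relIndex L T = 4 ∧
            x = Finsupp.single L 1 +
              ∑ᶠ (M : Subgroup K) (_ : L < M ∧ M < T), Finsupp.single M 1}) :=
  ker_linearizationMap_eq_span_relations_general K
end

section
/- Let V be a finite commutative group with Nat.card V = 4 in which every element squares to the identity (a Klein four-group). Let F := ((V →* ℤˣ) →₀ ZMod 2), and for each subgroup H of V let res_H : F →ₗ[ZMod 2] ((H →* ℤˣ) →₀ ZMod 2) be the linear map Finsupp.mapDomain along character restriction χ ↦ χ.comp H.subtype. Then the intersection, over all subgroups H of V with Nat.card H = 2, of the kernels of res_H equals the ZMod 2-span of the single element Σ_χ Finsupp.single χ 1, the sum taken over all (four) homomorphisms χ : V →* ℤˣ. -/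
set_option linter.unusedSectionVars false

private lemma eq_of_ne_one_of_card_two {Q : Type*} [Group Q] [Finite Q]
    (hQ : Nat.card Q = 2) {a b : Q} (ha : a ≠ 1) (hb : b ≠ 1) : a = b := by
  classical
  by_contra hab
  haveI := Fintype.ofFinite Q
  have h3 : ({1, a, b} : Finset Q).card ≤ Fintype.card Q :=
    Finset.card_le_card (Finset.subset_univ _)
  rw [Finset.card_insert_of_notMem (by simp [Ne.symm ha, Ne.symm hb]),
    Finset.card_insert_of_notMem (by simp [hab]), Finset.card_singleton] at h3
  rw [Nat.card_eq_fintype_card] at hQ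
  omega

private lemma mul_self_eq_one_of_card_two {Q : Type*} [Group Q] [Finite Q]
    (hQ : Nat.card Q = 2) (a : Q) : a * a = 1 := by
  by_cases ha : a = 1
  · simp [ha]
  · by_contra h
    have h1 : a * a = a := eq_of_ne_one_of_card_two hQ h ha
    exact ha (mul_left_cancel (a := a) (by rw [h1, mul_one]))

open Classical in
private noncomputable def charOfCardTwo {Q : Type*} [Group Q] [Finite Q]
    (hQ : Nat.card Q = 2) : Q →* ℤˣ where
  toFun q := if q = 1 then 1 else -1
  map_one' := if_pos rfl
  map_mul' a b := by
    by_cases ha : a = 1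
    · simp [ha]
    by_cases hb : b = 1
    · simp [hb]
    have hab : a = b := eq_of_ne_one_of_card_two hQ ha hb
    have : a * b = 1 := by rw [hab]; exact mul_self_eq_one_of_card_two hQ b
    simp [this, ha, hb]

private lemma charOfCardTwo_eq_one_iff {Q : Type*} [Group Q] [Finite Q]
    (hQ : Nat.card Q = 2) (q : Q) : charOfCardTwo hQ q = 1 ↔ q = 1 := by
  classical
  constructor
  · intro h
    by_contra hq
    simp only [charOfCardTwo, MonoidHom.coe_mk, OneHom.coe_mk, if_neg hq] at h
    exact absurd h (by decide)
  · intro h; simp [charOfCardTwo, h]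

section
variable {V : Type*} [CommGroup V] [Finite V]

private lemma char_mul_self (χ : V →* ℤˣ) : χ * χ = 1 := by
  ext x
  simp [Int.units_mul_self]

private lemma card_ker_eq_two (hcard : Nat.card V = 4) {χ : V →* ℤˣ} (hχ : χ ≠ 1) :
    Nat.card χ.ker = 2 := by
  obtain ⟨x, hx⟩ : ∃ x, χ x ≠ 1 := by
    by_contra h
    push_neg at h
    exact hχ (MonoidHom.ext fun y => h y)
  have hsurj : Function.Surjective χ := by
    intro u
    rcases Int.units_eq_one_or u with rfl | rfl
    · exact ⟨1, map_one χ⟩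
    · exact ⟨x, (Int.units_eq_one_or (χ x)).resolve_left hx⟩
  have hq : Nat.card (V ⧸ χ.ker) = 2 := by
    rw [Nat.card_congr (QuotientGroup.quotientKerEquivOfSurjective χ hsurj).toEquiv]
    simp [Nat.card_eq_fintype_card]
  have := Subgroup.card_eq_card_quotient_mul_card_subgroup χ.ker
  rw [hcard, hq] at this
  omega

private lemma char_unique (hcard : Nat.card V = 4) {H : Subgroup V} (hH : Nat.card H = 2)
    {χ χ' : V →* ℤˣ} (h1 : χ ≠ 1) (h1' : χ' ≠ 1) (hk : H ≤ χ.ker) (hk' : H ≤ χ'.ker) :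
    χ = χ' := by
  have hker : ∀ ψ : V →* ℤˣ, ψ ≠ 1 → H ≤ ψ.ker → ψ.ker = H := by
    intro ψ hψ hle
    have hc := card_ker_eq_two hcard hψ
    have : (H : Set V) = (ψ.ker : Set V) := by
      refine Set.eq_of_subset_of_ncard_le hle ?_ (ψ.ker : Set V).toFinite
      rw [← Nat.card_coe_set_eq, ← Nat.card_coe_set_eq]
      simp only [SetLike.coe_sort_coe]
      rw [hc, hH]
    exact (SetLike.ext' this).symm
  have hkχ := hker χ h1 hk
  have hkχ' := hker χ' h1' hk'
  ext x
  by_cases hx : x ∈ H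
  · rw [hk hx, hk' hx]
  · have e1 : χ x = -1 := by
      refine (Int.units_eq_one_or (χ x)).resolve_left fun h => hx ?_
      rw [← hkχ]; exact h
    have e2 : χ' x = -1 := by
      refine (Int.units_eq_one_or (χ' x)).resolve_left fun h => hx ?_
      rw [← hkχ']; exact h
    rw [e1, e2]

open Classical in
private lemma exists_char (hcard : Nat.card V = 4) {H : Subgroup V} (hH : Nat.card H = 2) :
    ∃ χ : V →* ℤˣ, χ ≠ 1 ∧ χ.ker = H := by
  have hq : Nat.card (V ⧸ H) = 2 := by
    have := Subgroup.card_eq_card_quotient_mul_card_subgroup H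
    rw [hcard, hH] at this; omega
  refine ⟨(charOfCardTwo hq).comp (QuotientGroup.mk' H), ?_, ?_⟩
  · obtain ⟨x, hx⟩ : ∃ x : V, x ∉ H := by
      by_contra h
      push_neg at h
      have htop : H = ⊤ := (Subgroup.eq_top_iff' H).2 h
      rw [htop, Subgroup.card_top, hcard] at hH
      omega
    intro h
    have h2 : charOfCardTwo hq ((QuotientGroup.mk' H) x) = 1 := by
      rw [show charOfCardTwo hq ((QuotientGroup.mk' H) x)
          = ((charOfCardTwo hq).comp (QuotientGroup.mk' H)) x from rfl, h]
      rfl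
    rw [charOfCardTwo_eq_one_iff] at h2
    exact hx ((QuotientGroup.eq_one_iff x).1 h2)
  · ext x
    simp [MonoidHom.mem_ker, charOfCardTwo_eq_one_iff, QuotientGroup.eq_one_iff]
end

/-- For a Klein four-group `V`, the common kernel of the restriction maps
`RO(V;ℝ)/2 → RO(H;ℝ)/2` over all order-2 subgroups `H` is spanned by the class of
the regular representation, i.e. the sum of all four characters. -/
theorem iInf_ker_restriction_eq_span_regular
    (V : Type*) [CommGroup V] [Finite V] (hcard : Nat.card V = 4)
    (hsq : ∀ v : V, v ^ 2 = 1) :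
    (⨅ (H : Subgroup V) (_ : Nat.card H = 2),
        LinearMap.ker (Finsupp.lmapDomain (ZMod 2) (ZMod 2)
          (fun χ : V →* ℤˣ => χ.comp H.subtype))) =
      Submodule.span (ZMod 2)
        {∑ᶠ χ : V →* ℤˣ, Finsupp.single χ (1 : ZMod 2)} := by
  classical
  haveI : Finite (V →* ℤˣ) := Finite.of_injective
    (fun χ : V →* ℤˣ => (χ : V → ℤˣ)) DFunLike.coe_injective
  haveI : Fintype (V →* ℤˣ) := Fintype.ofFinite _
  have hreg : (∑ᶠ χ : V →* ℤˣ, Finsupp.single χ (1 : ZMod 2))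
      = ∑ χ : V →* ℤˣ, Finsupp.single χ (1 : ZMod 2) := finsum_eq_sum_of_fintype _
  have hadd : ∀ a b : ZMod 2, a + b = 0 → a = b := by decide
  -- value of the restriction map at a point
  have hmap : ∀ (H : Subgroup V) (f : (V →* ℤˣ) →₀ ZMod 2) (ψ : (↥H →* ℤˣ)),
      (Finsupp.lmapDomain (ZMod 2) (ZMod 2)
          (fun χ : V →* ℤˣ => χ.comp H.subtype) f) ψ
        = ∑ χ ∈ Finset.univ.filter (fun χ : V →* ℤˣ => χ.comp H.subtype = ψ), f χ := by
    intro H f ψ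
    rw [Finsupp.lmapDomain_apply, Finsupp.mapDomain, Finsupp.sum_apply, Finsupp.sum,
      Finset.sum_filter]
    calc ∑ a ∈ f.support, (Finsupp.single (a.comp H.subtype) (f a)) ψ
        = ∑ a ∈ f.support, if a.comp H.subtype = ψ then f a else 0 :=
          Finset.sum_congr rfl fun a _ => Finsupp.single_apply
      _ = ∑ a : V →* ℤˣ, if a.comp H.subtype = ψ then f a else 0 :=
          Finset.sum_subset (Finset.subset_univ _)
            (fun x _ hx => by simp [Finsupp.notMem_support_iff.1 hx])
  -- value of the regular element at a point
  have hregval : ∀ ψ : V →* ℤˣ,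
      (∑ᶠ χ : V →* ℤˣ, Finsupp.single χ (1 : ZMod 2)) ψ = 1 := by
    intro ψ
    rw [hreg, Finsupp.finset_sum_apply]
    simp only [Finsupp.single_apply]
    rw [Finset.sum_ite_eq' Finset.univ ψ fun _ => (1 : ZMod 2)]
    simp
  apply le_antisymm
  · -- everything in the common kernel is a multiple of the regular element
    intro f hf
    simp only [Submodule.mem_iInf, LinearMap.mem_ker] at hf
    have hconst : ∀ χ₁ χ₂ : V →* ℤˣ, f χ₁ = f χ₂ := by
      intro χ₁ χ₂
      rcases eq_or_ne χ₁ χ₂ with rfl | hne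
      · rfl
      have hχ : χ₁ * χ₂ ≠ 1 := by
        intro h
        exact hne (mul_left_cancel (a := χ₁) (by rw [char_mul_self, h])).symm
      set H := (χ₁ * χ₂).ker with hHdef
      have hH : Nat.card H = 2 := card_ker_eq_two hcard hχ
      have h0 := DFunLike.congr_fun (hf H hH) (χ₁.comp H.subtype)
      rw [hmap H f (χ₁.comp H.subtype)] at h0
      have hfilter : Finset.univ.filter
          (fun a : V →* ℤˣ => a.comp H.subtype = χ₁.comp H.subtype) = {χ₁, χ₂} := by
        ext a
        simp only [Finset.mem_filter, Finset.mem_univ, true_and, Finset.mem_insert,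
          Finset.mem_singleton]
        constructor
        · intro h
          have hker : H ≤ (a * χ₁).ker := by
            intro v hv
            have hv' := DFunLike.congr_fun h (⟨v, hv⟩ : ↥H)
            simp only [MonoidHom.comp_apply, Subgroup.coe_subtype] at hv'
            have : (a * χ₁) v = χ₁ v * χ₁ v := by
              rw [MonoidHom.mul_apply, hv']
            rw [MonoidHom.mem_ker, this, Int.units_mul_self]
          by_cases h1 : a * χ₁ = 1
          · left
            have : a * (χ₁ * χ₁) = χ₁ := by rw [← mul_assoc, h1, one_mul]
            rw [char_mul_self, mul_one] at this
            exact this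
          · right
            have heq : a * χ₁ = χ₁ * χ₂ := char_unique hcard hH h1 hχ hker le_rfl
            have : a * (χ₁ * χ₁) = χ₂ * (χ₁ * χ₁) := by
              rw [← mul_assoc, heq, mul_comm χ₁ χ₂, mul_assoc]
            rw [char_mul_self, mul_one, mul_one] at this
            exact this
        · intro h
          rcases h with h | h
          · rw [h]
          · rw [h]
            ext v
            have hv : (χ₁ * χ₂) (v : V) = 1 := v.2
            rw [MonoidHom.mul_apply] at hv
            have : χ₂ (v : V) = (χ₁ (v : V))⁻¹ := eq_inv_of_mul_eq_one_left (by
              rw [mul_comm]; exact hv)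
            simp only [MonoidHom.comp_apply, Subgroup.coe_subtype]
            rw [this, inv_eq_of_mul_eq_one_right (Int.units_mul_self (χ₁ (v : V)))]
      rw [hfilter, Finset.sum_pair hne] at h0
      exact hadd _ _ h0
    rw [Submodule.mem_span_singleton]
    refine ⟨f 1, ?_⟩
    ext ψ
    rw [Finsupp.smul_apply, hregval ψ, smul_eq_mul, mul_one]
    exact hconst 1 ψ
  · -- the regular element lies in every kernel
    rw [Submodule.span_le, Set.singleton_subset_iff, SetLike.mem_coe]
    simp only [Submodule.mem_iInf, LinearMap.mem_ker]
    intro H hH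
    obtain ⟨χH, hχH1, hχHker⟩ := exists_char hcard hH
    have hcomp : χH.comp H.subtype = 1 := by
      ext v
      have : (v : V) ∈ χH.ker := by rw [hχHker]; exact v.2
      simpa [MonoidHom.comp_apply] using this
    ext ψ
    rw [hmap H _ ψ]
    have hvals : ∀ χ : V →* ℤˣ,
        (∑ᶠ χ' : V →* ℤˣ, Finsupp.single χ' (1 : ZMod 2)) χ = 1 := hregval
    rw [Finsupp.coe_zero, Pi.zero_apply]
    have g_mem : ∀ (a : V →* ℤˣ),
        a ∈ Finset.univ.filter (fun χ : V →* ℤˣ => χ.comp H.subtype = ψ) →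
        a * χH ∈ Finset.univ.filter (fun χ : V →* ℤˣ => χ.comp H.subtype = ψ) := by
      intro a ha
      simp only [Finset.mem_filter, Finset.mem_univ, true_and] at ha ⊢
      rw [MonoidHom.mul_comp, hcomp, mul_one, ha]
    refine Finset.sum_involution (fun a _ => a * χH) ?_ ?_ g_mem ?_
    · intro a _
      rw [hvals a, hvals (a * χH)]
      decide
    · intro a _ _
      intro h
      exact hχH1 (mul_left_cancel (a := a) (by rw [mul_one]; exact h))
    · intro a _
      show a * χH * χH = a
      rw [mul_assoc, char_mul_self, mul_one]
end

section
/- Let p be an odd prime and A a finite commutative group with Monoid.exponent A = p^e. Let g be a natural number whose residue class generates the unit group (ZMod (p^e))ˣ. Let σ be the ℤ-algebra endomorphism of the group algebra MonoidAlgebra ℤ A induced by the group homomorphism a ↦ a^g. Then the kernel of the ℤ-linear map σ − id and the cokernel (MonoidAlgebra ℤ A) ⧸ range(σ − id) are each free ℤ-modules of rank equal to the number of cyclic subgroups of A; that is, each is ℤ-linearly isomorphic to ({C : Subgroup A // IsCyclic C} →₀ ℤ). -/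
/-!
Let `n` be the exponent of `A`. Since `n ≠ 2` and `-1` is a power of `g` in `ℤ/n`, `g` is a unit
mod `n`, so `a ↦ a ^ g` permutes `A` and preserves each subgroup `⟨a⟩`. Its orbits are exactly the
sets of generators of the cyclic subgroups: if `⟨a⟩ = ⟨b⟩` then `b = a ^ k` with `k` a unit mod
`ord a`, which lifts to a unit mod `n`, i.e. to a power of `g`. For a permutation `σ` of a finite set
`X` whose orbits are the fibres of `q : X → Y`, the invariant vectors of `ℤ[X]` are the functions
constant on fibres, and the kernel of `ℤ[X] → ℤ[Y]` is spanned by the differences `σʲ x - x`;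
so invariants and coinvariants are both free on `Y`.
-/

open Finsupp Function Subgroup

section Conj

variable {R M N : Type*} [CommRing R] [AddCommGroup M] [Module R M] [AddCommGroup N] [Module R N]

theorem LinearEquiv.ker_conj (e : M ≃ₗ[R] N) (f : Module.End R M) :
    LinearMap.ker (e.conj f) = (LinearMap.ker f).map (e : M →ₗ[R] N) := by
  rw [LinearEquiv.conj_apply, LinearMap.ker_comp, LinearEquiv.ker_comp,
    Submodule.comap_equiv_eq_map_symm, LinearEquiv.symm_symm]

theorem LinearEquiv.range_conj (e : M ≃ₗ[R] N) (f : Module.End R M) :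
    LinearMap.range (e.conj f) = (LinearMap.range f).map (e : M →ₗ[R] N) := by
  rw [LinearEquiv.conj_apply, LinearMap.comp_assoc, LinearMap.range_comp,
    LinearMap.range_comp_of_range_eq_top _ e.symm.range]

noncomputable def LinearEquiv.kerConjEquiv (e : M ≃ₗ[R] N) (f : Module.End R M) :
    LinearMap.ker (e.conj f) ≃ₗ[R] LinearMap.ker f :=
  (e.ofSubmodules _ _ (e.ker_conj f).symm).symm

noncomputable def LinearEquiv.quotRangeConjEquiv (e : M ≃ₗ[R] N) (f : Module.End R M) :
    (N ⧸ LinearMap.range (e.conj f)) ≃ₗ[R] M ⧸ LinearMap.range f :=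
  (Submodule.Quotient.equiv _ _ e (e.range_conj f).symm).symm

end Conj

theorem MonoidAlgebra.mapDomainAlgHom_toLinearMap_sub_id {R M : Type*} [CommRing R] [Monoid M]
    (f : M →* M) :
    (mapDomainAlgHom R R f).toLinearMap - LinearMap.id =
      (coeffLinearEquiv R).symm.conj (lmapDomain R R f - LinearMap.id) :=
  LinearMap.ext fun x => MonoidAlgebra.coeff_injective (by simp [LinearEquiv.conj_apply])

def IsOrbitMap {X Y : Type*} (f : X → X) (q : X → Y) : Prop :=
  ∀ x y, q x = q y ↔ ∃ n, f^[n] x = y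

namespace IsOrbitMap

variable {X Y : Type*} {f : X → X} {q : X → Y}

theorem apply_self (h : IsOrbitMap f q) (x : X) : q (f x) = q x :=
  ((h x (f x)).2 ⟨1, rfl⟩).symm

theorem surjective_selfMap (h : IsOrbitMap f q) : Surjective f := fun x => by
  obtain ⟨n, hn⟩ := (h (f x) x).1 (h.apply_self x)
  exact ⟨f^[n] x, by rw [← iterate_succ_apply' f n x, iterate_succ_apply, hn]⟩

theorem factorsThrough_iff {Z : Type*} (h : IsOrbitMap f q) (v : X → Z) :
    v.FactorsThrough q ↔ ∀ x, v (f x) = v x := by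
  refine ⟨fun hv x => hv (h.apply_self x), fun hv x y hxy => ?_⟩
  obtain ⟨n, rfl⟩ := (h x y).1 hxy
  clear hxy
  induction n with
  | zero => rfl
  | succ n ih => rw [iterate_succ_apply', hv, ih]

end IsOrbitMap

section OrbitSums

variable (R : Type*) [Ring R] {X Y : Type*}

theorem single_iterate_sub_single_mem_range (f : X → X) (x : X) (r : R) (n : ℕ) :
    single (f^[n] x) r - single x r ∈ LinearMap.range (lmapDomain R R f - LinearMap.id) := by
  induction n with
  | zero => simp
  | succ n ih =>
    rw [← sub_add_sub_cancel _ (single (f^[n] x) r), iterate_succ_apply']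
    refine add_mem ⟨single (f^[n] x) r, ?_⟩ ih
    simp

theorem sub_mapDomain_mem_range {f s : X → X} (hs : ∀ x, ∃ n, f^[n] x = s x) (v : X →₀ R) :
    v - mapDomain s v ∈ LinearMap.range (lmapDomain R R f - LinearMap.id) := by
  induction v using Finsupp.induction_linear with
  | zero => simp
  | add v w hv hw => rw [mapDomain_add, add_sub_add_comm]; exact add_mem hv hw
  | single x r =>
    obtain ⟨n, hn⟩ := hs x
    rw [mapDomain_single, ← hn, ← neg_sub]
    exact neg_mem (single_iterate_sub_single_mem_range R f x r n)

variable {f : X → X} {q : X → Y}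

theorem IsOrbitMap.range_lmapDomain_sub_id (h : IsOrbitMap f q) (hq : Surjective q) :
    LinearMap.range (lmapDomain R R f - LinearMap.id) = LinearMap.ker (lmapDomain R R q) := by
  apply le_antisymm
  · rintro _ ⟨v, rfl⟩
    have hqf : q ∘ f = q := funext h.apply_self
    rw [LinearMap.mem_ker, lmapDomain_apply, LinearMap.sub_apply, LinearMap.id_apply,
      lmapDomain_apply, mapDomain_sub, ← mapDomain_comp, hqf, sub_self]
  · intro v hv
    have hs (x : X) : ∃ n, f^[n] x = (surjInv hq ∘ q) x := (h _ _).1 (surjInv_eq hq (q x)).symm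
    have hqv : mapDomain q v = 0 := hv
    have hv0 : mapDomain (surjInv hq ∘ q) v = 0 := by rw [mapDomain_comp, hqv, mapDomain_zero]
    have := sub_mapDomain_mem_range R hs v
    rwa [hv0, sub_zero] at this

noncomputable def IsOrbitMap.quotRangeEquiv (h : IsOrbitMap f q) (hq : Surjective q) :
    ((X →₀ R) ⧸ LinearMap.range (lmapDomain R R f - LinearMap.id)) ≃ₗ[R] (Y →₀ R) :=
  (Submodule.quotEquivOfEq _ _ (h.range_lmapDomain_sub_id R hq)).trans
    ((lmapDomain R R q).quotKerEquivOfSurjective (mapDomain_surjective hq))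

variable [Finite X] [Finite Y]

noncomputable def Finsupp.lcomapDomainOfFinite (q : X → Y) : (Y →₀ R) →ₗ[R] X →₀ R :=
  (linearEquivFunOnFinite R R X).symm.toLinearMap ∘ₗ LinearMap.funLeft R R q ∘ₗ
    (linearEquivFunOnFinite R R Y).toLinearMap

@[simp]
theorem Finsupp.lcomapDomainOfFinite_apply (q : X → Y) (w : Y →₀ R) (x : X) :
    lcomapDomainOfFinite R q w x = w (q x) :=
  rfl

theorem Finsupp.lcomapDomainOfFinite_injective (hq : Surjective q) :
    Injective (lcomapDomainOfFinite R q) := by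
  intro v w hvw
  ext y
  obtain ⟨x, rfl⟩ := hq y
  simpa using DFunLike.congr_fun hvw x

theorem Finsupp.mem_range_lcomapDomainOfFinite_iff (v : X →₀ R) :
    v ∈ LinearMap.range (lcomapDomainOfFinite R q) ↔ (⇑v).FactorsThrough q := by
  constructor
  · rintro ⟨w, rfl⟩ a b hab
    simp [hab]
  · intro hv
    exact ⟨equivFunOnFinite.symm (extend q v 0), Finsupp.ext fun x => by simp [hv.extend_apply]⟩

theorem IsOrbitMap.ker_lmapDomain_sub_id (h : IsOrbitMap f q) :
    LinearMap.ker (lmapDomain R R f - LinearMap.id) =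
      LinearMap.range (lcomapDomainOfFinite R q) := by
  have hinj : Injective f := Finite.injective_iff_surjective.2 h.surjective_selfMap
  ext v
  rw [mem_range_lcomapDomainOfFinite_iff, h.factorsThrough_iff, LinearMap.mem_ker,
    LinearMap.sub_apply, sub_eq_zero, Finsupp.ext_iff, h.surjective_selfMap.forall]
  simp only [lmapDomain_apply, LinearMap.id_apply, mapDomain_apply hinj]
  exact forall_congr' fun x => eq_comm

noncomputable def IsOrbitMap.kerEquiv (h : IsOrbitMap f q) (hq : Surjective q) :
    LinearMap.ker (lmapDomain R R f - LinearMap.id) ≃ₗ[R] (Y →₀ R) :=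
  (LinearEquiv.ofEq _ _ (h.ker_lmapDomain_sub_id R)).trans
    (LinearEquiv.ofInjective _ (lcomapDomainOfFinite_injective R hq)).symm

end OrbitSums

theorem ZMod.coprime_of_forall_units_eq_pow {n g : ℕ} [NeZero n] (hn : n ≠ 2)
    (hg : ∀ u : (ZMod n)ˣ, ∃ j : ℕ, (u : ZMod n) = (g : ZMod n) ^ j) : g.Coprime n := by
  rcases (by have := NeZero.ne n; omega : n = 1 ∨ 2 < n) with rfl | hn2
  · exact Nat.coprime_one_right g
  have : Fact (2 < n) := ⟨hn2⟩
  obtain ⟨j, hj⟩ := hg (-1)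
  have hj0 : j ≠ 0 := by
    rintro rfl
    exact ZMod.neg_one_ne_one (by simpa using hj)
  rw [← ZMod.isUnit_iff_coprime, ← isUnit_pow_iff hj0, ← hj]
  exact Units.isUnit _

theorem ZMod.forall_units_eq_pow_of_dvd_s16 {m n g : ℕ} [NeZero n] (hmn : m ∣ n)
    (hg : ∀ u : (ZMod n)ˣ, ∃ j : ℕ, (u : ZMod n) = (g : ZMod n) ^ j) (u : (ZMod m)ˣ) :
    ∃ j : ℕ, (u : ZMod m) = (g : ZMod m) ^ j := by
  obtain ⟨v, rfl⟩ := ZMod.unitsMap_surjective hmn u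
  obtain ⟨j, hj⟩ := hg v
  exact ⟨j, by rw [ZMod.unitsMap_val, hj, ZMod.cast_pow hmn, ZMod.cast_natCast hmn]⟩

section Group

variable {G : Type*} [Group G]

theorem zpowers_pow_eq_of_coprime {a : G} {k : ℕ} (hk : k.Coprime (orderOf a)) :
    zpowers (a ^ k) = zpowers a :=
  le_antisymm (zpowers_le.2 (pow_mem (mem_zpowers a) k)) (zpowers_le.2 (mem_zpowers_pow_iff.2 hk))

theorem exists_pow_eq_of_zpowers_eq {a b : G} (ha : IsOfFinOrder a) (h : zpowers a = zpowers b) :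
    ∃ k : ℕ, k.Coprime (orderOf a) ∧ a ^ k = b := by
  obtain ⟨k, rfl⟩ : b ∈ Submonoid.powers a := ha.mem_powers_iff_mem_zpowers.2 (h ▸ mem_zpowers b)
  exact ⟨k, mem_zpowers_pow_iff.1 (h ▸ mem_zpowers a), rfl⟩

theorem exists_pow_pow_eq_of_zpowers_eq [Finite G] {g : ℕ}
    (hg : ∀ u : (ZMod (Monoid.exponent G))ˣ, ∃ j : ℕ,
      (u : ZMod (Monoid.exponent G)) = (g : ZMod (Monoid.exponent G)) ^ j)
    {a b : G} (h : zpowers a = zpowers b) :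
    ∃ j : ℕ, a ^ g ^ j = b := by
  have : NeZero (Monoid.exponent G) := ⟨Monoid.exponent_ne_zero_of_finite⟩
  obtain ⟨k, hk, rfl⟩ := exists_pow_eq_of_zpowers_eq (isOfFinOrder_of_finite a) h
  obtain ⟨j, hj⟩ :=
    ZMod.forall_units_eq_pow_of_dvd_s16 (Monoid.order_dvd_exponent a) hg (ZMod.unitOfCoprime k hk)
  refine ⟨j, pow_eq_pow_iff_modEq.2 ?_⟩
  rw [← ZMod.natCast_eq_natCast_iff, Nat.cast_pow, ← hj, ZMod.coe_unitOfCoprime]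

def zpowersCyclic (a : G) : {C : Subgroup G // IsCyclic C} :=
  ⟨zpowers a, inferInstance⟩

theorem zpowersCyclic_surjective : Surjective (zpowersCyclic (G := G)) := fun C =>
  let ⟨a, ha⟩ := (C.1.isCyclic_iff_exists_zpowers_eq_top).1 C.2
  ⟨a, Subtype.ext ha⟩

theorem isOrbitMap_pow_zpowersCyclic [Finite G] {g : ℕ} (hexp : Monoid.exponent G ≠ 2)
    (hg : ∀ u : (ZMod (Monoid.exponent G))ˣ, ∃ j : ℕ,
      (u : ZMod (Monoid.exponent G)) = (g : ZMod (Monoid.exponent G)) ^ j) :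
    IsOrbitMap (· ^ g : G → G) zpowersCyclic := by
  have : NeZero (Monoid.exponent G) := ⟨Monoid.exponent_ne_zero_of_finite⟩
  intro a b
  simp only [pow_iterate]
  refine ⟨fun h => exists_pow_pow_eq_of_zpowers_eq hg (congrArg Subtype.val h), ?_⟩
  rintro ⟨j, rfl⟩
  have hcop : (g ^ j).Coprime (orderOf a) :=
    ((ZMod.coprime_of_forall_units_eq_pow hexp hg).pow_left j).coprime_dvd_right
      (Monoid.order_dvd_exponent a)
  exact Subtype.ext (zpowers_pow_eq_of_coprime hcop).symm

end Group

theorem ker_and_coker_of_adams_operation_on_group_algebra_general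
    (p : ℕ) (hp2 : p ≠ 2)
    (A : Type*) [CommGroup A] [Finite A] (e : ℕ)
    (hexp : Monoid.exponent A = p ^ e)
    (g : ℕ)
    (hg : ∀ u : (ZMod (p ^ e))ˣ, ∃ j : ℕ, (u : ZMod (p ^ e)) = (g : ZMod (p ^ e)) ^ j) :
    Nonempty
      ((LinearMap.ker
          ((MonoidAlgebra.mapDomainAlgHom ℤ ℤ (powMonoidHom g : A →* A)).toLinearMap
            - LinearMap.id)) ≃ₗ[ℤ]
        ({C : Subgroup A // IsCyclic C} →₀ ℤ)) ∧
    Nonempty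
      ((MonoidAlgebra ℤ A ⧸
          LinearMap.range
            ((MonoidAlgebra.mapDomainAlgHom ℤ ℤ (powMonoidHom g : A →* A)).toLinearMap
              - LinearMap.id)) ≃ₗ[ℤ]
        ({C : Subgroup A // IsCyclic C} →₀ ℤ)) := by
  have hexp2 : Monoid.exponent A ≠ 2 := hexp ▸ fun h => hp2 (Nat.prime_two.pow_eq_iff.1 h).1
  rw [← hexp] at hg
  have h : IsOrbitMap (powMonoidHom g : A →* A) zpowersCyclic :=
    isOrbitMap_pow_zpowersCyclic hexp2 hg
  rw [MonoidAlgebra.mapDomainAlgHom_toLinearMap_sub_id]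
  exact ⟨⟨(LinearEquiv.kerConjEquiv _ _).trans (h.kerEquiv ℤ zpowersCyclic_surjective)⟩,
    ⟨(LinearEquiv.quotRangeConjEquiv _ _).trans (h.quotRangeEquiv ℤ zpowersCyclic_surjective)⟩⟩

/-- Let `p` be an odd prime, `A` a finite commutative group of exponent `p^e`, and `g`
a natural number whose class generates `(ℤ/p^e)ˣ`. Let `σ` be the endomorphism of the
group algebra `ℤ[A]` induced by `a ↦ a^g`. Then the kernel and the cokernel of the
`ℤ`-linear map `σ − id` are each free `ℤ`-modules with basis indexed by the cyclic
subgroups of `A`. -/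
theorem ker_and_coker_of_adams_operation_on_group_algebra
    (p : ℕ) (hp : p.Prime) (hp2 : p ≠ 2)
    (A : Type*) [CommGroup A] [Finite A] (e : ℕ)
    (hexp : Monoid.exponent A = p ^ e)
    (g : ℕ)
    (hg : ∀ u : (ZMod (p ^ e))ˣ, ∃ j : ℕ, (u : ZMod (p ^ e)) = (g : ZMod (p ^ e)) ^ j) :
    Nonempty
      ((LinearMap.ker
          ((MonoidAlgebra.mapDomainAlgHom ℤ ℤ (powMonoidHom g : A →* A)).toLinearMap
            - LinearMap.id)) ≃ₗ[ℤ]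
        ({C : Subgroup A // IsCyclic C} →₀ ℤ)) ∧
    Nonempty
      ((MonoidAlgebra ℤ A ⧸
          LinearMap.range
            ((MonoidAlgebra.mapDomainAlgHom ℤ ℤ (powMonoidHom g : A →* A)).toLinearMap
              - LinearMap.id)) ≃ₗ[ℤ]
        ({C : Subgroup A // IsCyclic C} →₀ ℤ)) :=
  ker_and_coker_of_adams_operation_on_group_algebra_general p hp2 A e hexp g hg
end
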